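/- arXiv:1502.08012 — 6 statements merged into one kernel-verified Lean document; each statement's English description precedes it below -/
import Mathlib

section
/- (Potter's bounds.) Let a ∈ ℝ and let φ : [a,∞) → (0,∞) be a measurable function that is regularly varying at infinity with index ρ ∈ ℝ, i.e. for every x > 0, lim_{t→∞} φ(tx)/φ(t) = x^ρ. Then for every ε with 0 < ε < 1 there exists t₀ = t₀(ε) ≥ a such that for all t ≥ t₀ and all x > 0 with tx ≥ t₀: (1−ε) x^ρ min(x^ε, x^{−ε}) < φ(tx)/φ(t) < (1+ε) x^ρ max(x^ε, x^{−ε}). -/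
open Filter Set

open MeasureTheory

private lemma potter_fill {c d δ : ℝ} (hδ : 0 < δ) (F : ℕ → ℝ → ℝ)
    (hFpt : ∀ s, Tendsto (fun n => F n s) atTop (nhds 0)) :
    Tendsto (fun k => volume (Icc c d ∩ {s | ∀ m ≥ k, |F m s| ≤ δ}))
      atTop (nhds (volume (Icc c d))) := by
  have hmono : Monotone (fun k => Icc c d ∩ {s | ∀ m ≥ k, |F m s| ≤ δ}) := by
    intro i j hij s hs
    exact ⟨hs.1, fun m hm => hs.2 m (le_trans hij hm)⟩
  have hunion : (⋃ k, Icc c d ∩ {s | ∀ m ≥ k, |F m s| ≤ δ}) = Icc c d := by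
    apply Subset.antisymm
    · exact iUnion_subset fun k => inter_subset_left
    · intro s hs
      have : ∀ᶠ m in atTop, |F m s| ≤ δ := by
        have h0 : Tendsto (fun n => |F n s|) atTop (nhds 0) := by
          simpa using (hFpt s).abs
        exact (h0.eventually_lt_const hδ).mono fun m hm => hm.le
      obtain ⟨k, hk⟩ := eventually_atTop.1 this
      exact mem_iUnion.2 ⟨k, hs, hk⟩
  have := tendsto_measure_iUnion_atTop (μ := volume) hmono
  rwa [hunion] at this

private lemma potter_unif (h : ℝ → ℝ) (hmeas : Measurable h) (ρ : ℝ)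
    (hpt : ∀ u : ℝ, Tendsto (fun t => h (t + u) - h t - ρ * u) atTop (nhds 0)) :
    ∀ δ > (0:ℝ), ∃ T : ℝ, ∀ t ≥ T, ∀ u ∈ Icc (0:ℝ) 1, |h (t + u) - h t - ρ * u| ≤ δ := by
  intro δ hδ
  by_contra hcon
  push_neg at hcon
  choose t ht u hu hbad using fun n : ℕ => hcon n
  have htn : Tendsto t atTop atTop :=
    tendsto_atTop_mono ht tendsto_natCast_atTop_atTop
  set F : ℕ → ℝ → ℝ := fun n s => h (t n + s) - h (t n) - ρ * s with hF
  set G : ℕ → ℝ → ℝ := fun n v => h (t n + u n + v) - h (t n + u n) - ρ * v with hG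
  have hFpt : ∀ s, Tendsto (fun n => F n s) atTop (nhds 0) :=
    fun s => (hpt s).comp htn
  have htun : Tendsto (fun n => t n + u n) atTop atTop :=
    tendsto_atTop_mono (fun n => by linarith [(hu n).1, ht n]) tendsto_natCast_atTop_atTop
  have hGpt : ∀ v, Tendsto (fun n => G n v) atTop (nhds 0) :=
    fun v => (hpt v).comp htun
  have hGm : ∀ n, Measurable (G n) := fun n =>
    ((hmeas.comp (measurable_const.add measurable_id)).sub measurable_const).sub
      (measurable_const.mul measurable_id)
  have key : ∀ n s, F n (u n) = F n s - G n (s - u n) := by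
    intro n s
    have harg : t n + u n + (s - u n) = t n + s := by ring
    simp only [hF, hG, harg]
    ring
  have hbad' : ∀ n, δ < |F n (u n)| := fun n => hbad n
  have hδ2 : (0:ℝ) < δ/2 := by linarith
  have hA := potter_fill (c := 0) (d := 2) hδ2 F hFpt
  have hB := potter_fill (c := -1) (d := 2) hδ2 G hGpt
  clear_value F G
  -- contradiction block (as verified in uc3)
  rw [Real.volume_Icc] at hA hB
  have h74 : (ENNReal.ofReal (7/4)) < ENNReal.ofReal (2 - 0) := by
    rw [ENNReal.ofReal_lt_ofReal_iff (by norm_num)]; norm_num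
  have h114 : (ENNReal.ofReal (11/4)) < ENNReal.ofReal (2 - (-1)) := by
    rw [ENNReal.ofReal_lt_ofReal_iff (by norm_num)]; norm_num
  obtain ⟨k₁, hk₁⟩ := eventually_atTop.1 (hA.eventually_const_lt h74)
  obtain ⟨k₂, hk₂⟩ := eventually_atTop.1 (hB.eventually_const_lt h114)
  set n := max k₁ k₂ with hn
  set A : Set ℝ := Icc (0:ℝ) 2 ∩ {s | ∀ m ≥ k₁, |F m s| ≤ δ/2} with hA'
  set B : Set ℝ := Icc (-1:ℝ) 2 ∩ {s | ∀ m ≥ k₂, |G m s| ≤ δ/2} with hB'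
  set D : Set ℝ := (fun s => s + (-(u n))) ⁻¹' B with hD'
  have hBmeas : MeasurableSet B := by
    have : {s | ∀ m ≥ k₂, |G m s| ≤ δ/2} = ⋂ (m) (_ : m ≥ k₂), {s | |G m s| ≤ δ/2} := by
      ext s; simp
    rw [hB', this]
    exact measurableSet_Icc.inter (MeasurableSet.iInter fun m => MeasurableSet.iInter fun _ =>
      measurableSet_le (hGm m).abs measurable_const)
  have hDmeas : MeasurableSet D := hBmeas.preimage (measurable_id.add_const _)
  have hne : (A ∩ (D ∩ Icc (0:ℝ) 2)).Nonempty := by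
    by_contra hemp
    rw [not_nonempty_iff_eq_empty] at hemp
    have hdisj : Disjoint A (D ∩ Icc (0:ℝ) 2) := disjoint_iff_inter_eq_empty.2 hemp
    have h1 : volume (A ∪ (D ∩ Icc (0:ℝ) 2)) = volume A + volume (D ∩ Icc (0:ℝ) 2) :=
      measure_union hdisj (hDmeas.inter measurableSet_Icc)
    have h2 : volume (A ∪ (D ∩ Icc (0:ℝ) 2)) ≤ ENNReal.ofReal 2 := by
      have : A ∪ (D ∩ Icc (0:ℝ) 2) ⊆ Icc (0:ℝ) 2 :=
        union_subset inter_subset_left inter_subset_right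
      calc volume (A ∪ (D ∩ Icc (0:ℝ) 2)) ≤ volume (Icc (0:ℝ) 2) := measure_mono this
        _ = ENNReal.ofReal 2 := by rw [Real.volume_Icc]; norm_num
    have hDvol : volume D = volume B := measure_preimage_add_right volume _ B
    have hDsplit : volume D = volume (D ∩ Icc (0:ℝ) 2) + volume (D \ Icc (0:ℝ) 2) :=
      (measure_inter_add_diff D measurableSet_Icc).symm
    have hDout : volume (D \ Icc (0:ℝ) 2) ≤ ENNReal.ofReal 2 := by
      have hsub : D \ Icc (0:ℝ) 2 ⊆ Icc (-1:ℝ) 0 ∪ Icc (2:ℝ) 3 := by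
        intro s hs
        obtain ⟨hsD, hsI⟩ := hs
        have hB1 : s + (-(u n)) ∈ Icc (-1:ℝ) 2 := hsD.1
        have hu1 := (hu n).1; have hu2 := (hu n).2
        simp only [mem_Icc, not_and_or, not_le] at hsI
        rcases hsI with hlt | hlt
        · left; constructor <;> [linarith [hB1.1]; linarith]
        · right; constructor <;> [linarith; linarith [hB1.2]]
      calc volume (D \ Icc (0:ℝ) 2) ≤ volume (Icc (-1:ℝ) 0 ∪ Icc (2:ℝ) 3) := measure_mono hsub
        _ ≤ volume (Icc (-1:ℝ) 0) + volume (Icc (2:ℝ) 3) := measure_union_le _ _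
        _ = ENNReal.ofReal 1 + ENNReal.ofReal 1 := by
            rw [Real.volume_Icc, Real.volume_Icc]; norm_num
        _ = ENNReal.ofReal 2 := by rw [← ENNReal.ofReal_add] <;> norm_num
    have hAv : ENNReal.ofReal (7/4) < volume A := hk₁ k₁ le_rfl
    have hBv : ENNReal.ofReal (11/4) < volume B := hk₂ k₂ le_rfl
    have hsum : ENNReal.ofReal (7/4) + ENNReal.ofReal (11/4) < volume A + volume B :=
      ENNReal.add_lt_add hAv hBv
    have hle : volume A + volume B ≤ ENNReal.ofReal 2 + ENNReal.ofReal 2 := by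
      calc volume A + volume B = volume A + volume D := by rw [hDvol]
        _ = volume A + (volume (D ∩ Icc (0:ℝ) 2) + volume (D \ Icc (0:ℝ) 2)) := by
            rw [← hDsplit]
        _ ≤ ENNReal.ofReal 2 + ENNReal.ofReal 2 := by
            rw [← add_assoc, ← h1]
            exact add_le_add h2 hDout
    have hfin : ENNReal.ofReal (7/4) + ENNReal.ofReal (11/4)
        < ENNReal.ofReal 2 + ENNReal.ofReal 2 := lt_of_lt_of_le hsum hle
    rw [← ENNReal.ofReal_add (by norm_num) (by norm_num),
      ← ENNReal.ofReal_add (by norm_num) (by norm_num),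
      ENNReal.ofReal_lt_ofReal_iff (by norm_num)] at hfin
    norm_num at hfin
  obtain ⟨s, hsA, hsD, _⟩ := hne
  have h1 : |F n s| ≤ δ/2 := hsA.2 n (le_max_left _ _)
  have h2 : |G n (s - u n)| ≤ δ/2 := by
    have hmem : s + (-(u n)) ∈ B := hsD
    exact hmem.2 n (le_max_right _ _) |>.trans_eq' (by rw [sub_eq_add_neg])
  have hcontra := hbad' n
  rw [key n s] at hcontra
  have habs : |F n s - G n (s - u n)| ≤ δ := by
    calc |F n s - G n (s - u n)| ≤ |F n s| + |G n (s - u n)| := abs_sub _ _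
      _ ≤ δ/2 + δ/2 := add_le_add h1 h2
      _ = δ := by ring
  linarith


private lemma potter_steps (h : ℝ → ℝ) (ρ δ T : ℝ) (hδ : 0 ≤ δ)
    (H : ∀ t ≥ T, ∀ u ∈ Icc (0:ℝ) 1, |h (t + u) - h t - ρ * u| ≤ δ) :
    ∀ n : ℕ, ∀ t ≥ T, ∀ u : ℝ, 0 ≤ u → u ≤ n + 1 →
      |h (t + u) - h t - ρ * u| ≤ (n + 1) * δ := by
  intro n
  induction n with
  | zero =>
    intro t ht u hu0 hu1
    simpa using H t ht u ⟨hu0, by push_cast at hu1; linarith⟩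
  | succ n ih =>
    intro t ht u hu0 hu1
    push_cast at hu1
    rcases le_or_gt u (n + 1) with hle | hgt
    · calc |h (t + u) - h t - ρ * u| ≤ (n + 1) * δ := ih t ht u hu0 hle
        _ ≤ ((n:ℝ) + 1 + 1) * δ := by nlinarith
        _ = ((n + 1 : ℕ) + 1 : ℝ) * δ := by push_cast; ring
    · have hn1 : (0:ℝ) ≤ (n:ℝ) := Nat.cast_nonneg n
      have h1 : (0:ℝ) ≤ u - 1 := by linarith
      have h2 : u - 1 ≤ (n:ℝ) + 1 := by linarith
      have hbase : t + (u - 1) ≥ T := by linarith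
      have step1 := H (t + (u - 1)) hbase 1 ⟨zero_le_one, le_refl 1⟩
      have step2 := ih t ht (u - 1) h1 h2
      have key : h (t + u) - h t - ρ * u =
          (h (t + (u - 1) + 1) - h (t + (u - 1)) - ρ * 1) +
          (h (t + (u - 1)) - h t - ρ * (u - 1)) := by
        have : t + (u - 1) + 1 = t + u := by ring
        rw [this]; ring
      rw [key]
      calc |_ + _| ≤ |h (t + (u - 1) + 1) - h (t + (u - 1)) - ρ * 1| +
            |h (t + (u - 1)) - h t - ρ * (u - 1)| := abs_add_le _ _
        _ ≤ δ + (n + 1) * δ := add_le_add step1 step2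
        _ = ((n + 1 : ℕ) + 1 : ℝ) * δ := by push_cast; ring

private lemma potter_bound (h : ℝ → ℝ) (ρ δ T : ℝ) (hδ : 0 ≤ δ)
    (H : ∀ t ≥ T, ∀ u ∈ Icc (0:ℝ) 1, |h (t + u) - h t - ρ * u| ≤ δ) :
    ∀ t ≥ T, ∀ u : ℝ, t + u ≥ T → |h (t + u) - h t - ρ * u| ≤ (|u| + 1) * δ := by
  have main : ∀ t ≥ T, ∀ u : ℝ, 0 ≤ u → |h (t + u) - h t - ρ * u| ≤ (u + 1) * δ := by
    intro t ht u hu0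
    have hfl : u ≤ (⌊u⌋₊ : ℝ) + 1 := (Nat.lt_floor_add_one u).le
    calc |h (t + u) - h t - ρ * u| ≤ ((⌊u⌋₊ : ℝ) + 1) * δ :=
          potter_steps h ρ δ T hδ H ⌊u⌋₊ t ht u hu0 hfl
      _ ≤ (u + 1) * δ := by
          have := Nat.floor_le hu0
          nlinarith
  intro t ht u htu
  rcases le_or_gt 0 u with hu0 | hu0
  · rw [abs_of_nonneg hu0]; exact main t ht u hu0
  · have := main (t + u) htu (-u) (by linarith)
    have harg : t + u + -u = t := by ring
    rw [harg] at this
    rw [abs_of_neg hu0]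
    calc |h (t + u) - h t - ρ * u| = |h t - h (t + u) - ρ * -u| := by
          rw [← abs_neg]; ring_nf
      _ ≤ (-u + 1) * δ := this


private lemma potter_pt (a ρ : ℝ) (φ : ℝ → ℝ)
    (hφpos : ∀ t ≥ a, 0 < φ t)
    (hφRV : ∀ x > (0 : ℝ),
      Tendsto (fun t : ℝ => φ (t * x) / φ t) atTop (nhds (x ^ ρ))) (u : ℝ) :
    Tendsto (fun t => Real.log (φ (Real.exp (t + u))) - Real.log (φ (Real.exp t)) - ρ * u)
      atTop (nhds 0) := by
  have hx : (0:ℝ) < Real.exp u := Real.exp_pos u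
  have h1 : Tendsto (fun t : ℝ => φ (Real.exp t * Real.exp u) / φ (Real.exp t)) atTop
      (nhds ((Real.exp u) ^ ρ)) := (hφRV _ hx).comp Real.tendsto_exp_atTop
  have hlim_pos : (0:ℝ) < (Real.exp u) ^ ρ := Real.rpow_pos_of_pos hx ρ
  have h2 : Tendsto (fun t : ℝ => Real.log (φ (Real.exp t * Real.exp u) / φ (Real.exp t)))
      atTop (nhds (Real.log ((Real.exp u) ^ ρ))) :=
    (Real.continuousAt_log hlim_pos.ne').tendsto.comp h1
  have hlog : Real.log ((Real.exp u) ^ ρ) = ρ * u := by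
    rw [Real.log_rpow hx, Real.log_exp]
  have hev : ∀ᶠ t : ℝ in atTop,
      Real.log (φ (Real.exp t * Real.exp u) / φ (Real.exp t))
        = Real.log (φ (Real.exp (t + u))) - Real.log (φ (Real.exp t)) := by
    have e1 : ∀ᶠ t : ℝ in atTop, a ≤ Real.exp t :=
      Real.tendsto_exp_atTop.eventually (eventually_ge_atTop a)
    have e2 : ∀ᶠ t : ℝ in atTop, a ≤ Real.exp t * Real.exp u := by
      have : Tendsto (fun t : ℝ => Real.exp t * Real.exp u) atTop atTop :=
        Real.tendsto_exp_atTop.atTop_mul_const hx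
      exact this.eventually (eventually_ge_atTop a)
    filter_upwards [e1, e2] with t h1' h2'
    rw [Real.log_div (hφpos _ h2').ne' (hφpos _ h1').ne', Real.exp_add]
  have h3 : Tendsto (fun t : ℝ =>
      Real.log (φ (Real.exp (t + u))) - Real.log (φ (Real.exp t))) atTop (nhds (ρ * u)) := by
    rw [← hlog]
    exact h2.congr' hev
  simpa using h3.sub_const (ρ * u)

private lemma potter_maxmin (x e u : ℝ) (hx : 0 < x) (he : 0 ≤ e) (hu : u = Real.log x) :
    max (x ^ e) (x ^ (-e)) = Real.exp (e * |u|) ∧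
    min (x ^ e) (x ^ (-e)) = Real.exp (-(e * |u|)) := by
  have h1 : x ^ e = Real.exp (u * e) := by rw [Real.rpow_def_of_pos hx, hu]
  have h2 : x ^ (-e) = Real.exp (-(u * e)) := by
    rw [Real.rpow_def_of_pos hx, hu]; ring_nf
  have habs : e * |u| = |u * e| := by rw [abs_mul, abs_of_nonneg he]; ring
  rcases le_total 0 (u * e) with hp | hp
  · have hle : Real.exp (-(u * e)) ≤ Real.exp (u * e) := Real.exp_le_exp.2 (by linarith)
    rw [h1, h2, max_eq_left hle, min_eq_right hle, habs, abs_of_nonneg hp]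
    exact ⟨rfl, rfl⟩
  · have hle : Real.exp (u * e) ≤ Real.exp (-(u * e)) := Real.exp_le_exp.2 (by linarith)
    rw [h1, h2, max_eq_right hle, min_eq_left hle, habs, abs_of_nonpos hp]
    constructor <;> ring_nf


/-- **Potter's bounds.** If `φ` is a measurable function, positive on
`[a, ∞)`, regularly varying at infinity with index `ρ`, then for every `0 < ε < 1`
there is `t₀ ≥ a` such that for all `t ≥ t₀` and all `x > 0` with `t x ≥ t₀`,
`(1-ε) x^ρ min(x^ε, x^(-ε)) < φ(tx)/φ(t) < (1+ε) x^ρ max(x^ε, x^(-ε))`. -/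
theorem stmt_2 (a ρ : ℝ) (φ : ℝ → ℝ)
    (hφmeas : Measurable φ)
    (hφpos : ∀ t ≥ a, 0 < φ t)
    (hφRV : ∀ x > (0 : ℝ),
      Tendsto (fun t : ℝ => φ (t * x) / φ t) atTop (nhds (x ^ ρ))) :
    ∀ ε : ℝ, 0 < ε → ε < 1 → ∃ t₀ ≥ a,
      ∀ t ≥ t₀, ∀ x > (0 : ℝ), t * x ≥ t₀ →
        (1 - ε) * x ^ ρ * min (x ^ ε) (x ^ (-ε)) < φ (t * x) / φ t ∧
        φ (t * x) / φ t < (1 + ε) * x ^ ρ * max (x ^ ε) (x ^ (-ε)) := by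
  intro ε hε0 hε1
  set h : ℝ → ℝ := fun s => Real.log (φ (Real.exp s)) with hh
  have hmeas : Measurable h := Real.measurable_log.comp (hφmeas.comp Real.measurable_exp)
  have hpt : ∀ u : ℝ, Tendsto (fun t => h (t + u) - h t - ρ * u) atTop (nhds 0) :=
    fun u => potter_pt a ρ φ hφpos hφRV u
  -- choose δ
  have hlog1 : 0 < Real.log (1 + ε) := Real.log_pos (by linarith)
  set δ : ℝ := (1/2) * min ε (Real.log (1 + ε)) with hδdef
  have hminpos : 0 < min ε (Real.log (1 + ε)) := lt_min hε0 hlog1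
  have hδpos : 0 < δ := by rw [hδdef]; linarith
  have hδε : δ ≤ ε := by
    have := min_le_left ε (Real.log (1 + ε)); rw [hδdef]; linarith
  have hδlog : δ < Real.log (1 + ε) := by
    have := min_le_right ε (Real.log (1 + ε)); rw [hδdef]; linarith
  have hneglog : Real.log (1 - ε) < -Real.log (1 + ε) := by
    have hmul : Real.log ((1 - ε) * (1 + ε)) = Real.log (1 - ε) + Real.log (1 + ε) :=
      Real.log_mul (by linarith) (by linarith)
    have hlt : Real.log ((1 - ε) * (1 + ε)) < 0 :=
      Real.log_neg (by nlinarith) (by nlinarith)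
    linarith
  obtain ⟨T, hT⟩ := potter_unif h hmeas ρ hpt δ hδpos
  refine ⟨max a (Real.exp T), le_max_left _ _, ?_⟩
  intro t ht x hx htx
  have htpos : 0 < t := lt_of_lt_of_le (Real.exp_pos T) (le_trans (le_max_right _ _) ht)
  have htxpos : 0 < t * x := mul_pos htpos hx
  set τ := Real.log t with hτdef
  set u := Real.log x with hudef
  have hτ : τ ≥ T := (Real.le_log_iff_exp_le htpos).2 (le_trans (le_max_right _ _) ht)
  have hτu : τ + u ≥ T := by
    have h1 : Real.log (t * x) ≥ T :=
      (Real.le_log_iff_exp_le htxpos).2 (le_trans (le_max_right a (Real.exp T)) htx)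
    rwa [Real.log_mul htpos.ne' hx.ne'] at h1
  have hbd := potter_bound h ρ δ T hδpos.le hT τ hτ u hτu
  have hexp1 : Real.exp τ = t := Real.exp_log htpos
  have hexp2 : Real.exp (τ + u) = t * x := by
    rw [Real.exp_add, hexp1, Real.exp_log hx]
  have hφt : 0 < φ t := hφpos t (le_trans (le_max_left _ _) ht)
  have hφtx : 0 < φ (t * x) := hφpos _ (le_trans (le_max_left _ _) htx)
  set R := φ (t * x) / φ t with hR
  have hRpos : 0 < R := div_pos hφtx hφt
  have hlogR : h (τ + u) - h τ = Real.log R := by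
    rw [hh]
    simp only [hexp1, hexp2]
    rw [hR, Real.log_div hφtx.ne' hφt.ne']
  rw [hlogR] at hbd
  have habsd := abs_le.1 hbd
  have hu_nonneg : (0:ℝ) ≤ |u| := abs_nonneg u
  -- strict log bounds
  have hup : Real.log R < ρ * u + Real.log (1 + ε) + ε * |u| := by nlinarith [habsd.2]
  have hlo : ρ * u + Real.log (1 - ε) - ε * |u| < Real.log R := by nlinarith [habsd.1]
  obtain ⟨hmax, hmin⟩ := potter_maxmin x ε u hx hε0.le hudef
  have hxρ : x ^ ρ = Real.exp (ρ * u) := by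
    rw [Real.rpow_def_of_pos hx, hudef]; ring_nf
  constructor
  · calc (1 - ε) * x ^ ρ * min (x ^ ε) (x ^ (-ε))
        = Real.exp (ρ * u + Real.log (1 - ε) - ε * |u|) := by
          rw [hmin, hxρ, show ρ * u + Real.log (1 - ε) - ε * |u|
              = ρ * u + (Real.log (1 - ε) + -(ε * |u|)) by ring,
            Real.exp_add, Real.exp_add, Real.exp_log (by linarith : (0:ℝ) < 1 - ε)]
          ring
      _ < R := by
          rw [← Real.exp_log hRpos]
          exact Real.exp_lt_exp.2 hlo
  · calc R = Real.exp (Real.log R) := (Real.exp_log hRpos).symm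
      _ < Real.exp (ρ * u + Real.log (1 + ε) + ε * |u|) := Real.exp_lt_exp.2 hup
      _ = (1 + ε) * x ^ ρ * max (x ^ ε) (x ^ (-ε)) := by
          rw [hmax, hxρ, Real.exp_add, Real.exp_add,
            Real.exp_log (by linarith : (0:ℝ) < 1 + ε)]
          ring
end

section
/- Let 0 < γ₁ < γ₂, set γ := γ₁γ₂/(γ₁+γ₂), and let (Ω, 𝓐, P) be a probability space with W : [0,1] × Ω → ℝ a jointly measurable stochastic process such that each W_s is square-integrable with E[W_s] = 0 for all s ∈ [0,1], and E[W_s W_t] = min(s,t) for all s, t ∈ [0,1]. Then the random variable Z := (γ₁γ₂/(γ₁+γ₂)²) ∫₀¹ s^{−γ/γ₂ − 1} W_s ds + (γ₂/(γ₁+γ₂)) W_1 is centered, square-integrable, and E[Z²] = γ₂² / (γ₂² − γ₁²). -/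
/-!
Put `q = -γ/γ₂ - 1`, so that `q + 2 = γ₂/(γ₁+γ₂)` lies in `(1/2, 1)`, and
`G = ∫₀¹ s^q W_s ds`. Since `‖s^q W_s‖_{L²(P)} = s^(q+1/2)` is integrable on `(0,1]`, Fubini
applies to all first and second moments of `G`: `E G = 0`, `E[G W₁] = ∫₀¹ s^(q+1) ds = 1/(q+2)`
and `E G² = ∫∫ s^q t^q min(s,t) ds dt = 2/((q+2)(2q+3))`. Since `Z` is a linear combination of
`G` and `W₁`, expanding `E Z²` then gives `γ₂²/(γ₂²-γ₁²)`.
-/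

open Filter Set MeasureTheory

section L2

variable {Ω : Type*} [MeasurableSpace Ω] {P : Measure Ω} {f g : Ω → ℝ}

theorem integral_abs_mul_le_sqrt_mul_sqrt (hf : MemLp f 2 P) (hg : MemLp g 2 P) :
    ∫ ω, |f ω * g ω| ∂P ≤ √(∫ ω, f ω ^ 2 ∂P) * √(∫ ω, g ω ^ 2 ∂P) := by
  have two : ENNReal.ofReal 2 = 2 := by norm_num
  have key := integral_mul_le_Lp_mul_Lq_of_nonneg Real.HolderConjugate.two_two
    (ae_of_all _ fun ω => abs_nonneg (f ω)) (ae_of_all _ fun ω => abs_nonneg (g ω))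
    (two ▸ hf.abs) (two ▸ hg.abs)
  simpa only [abs_mul, Real.rpow_two, sq_abs, Real.sqrt_eq_rpow] using key

theorem integral_abs_le_sqrt_integral_sq [IsProbabilityMeasure P] (hf : MemLp f 2 P) :
    ∫ ω, |f ω| ∂P ≤ √(∫ ω, f ω ^ 2 ∂P) := by
  simpa using integral_abs_mul_le_sqrt_mul_sqrt hf (memLp_const (1 : ℝ))

theorem integral_const_mul_add_const_mul_sq (hf : MemLp f 2 P) (hg : MemLp g 2 P) (a b : ℝ) :
    ∫ ω, (a * f ω + b * g ω) ^ 2 ∂P =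
      a ^ 2 * ∫ ω, f ω ^ 2 ∂P + 2 * a * b * ∫ ω, f ω * g ω ∂P + b ^ 2 * ∫ ω, g ω ^ 2 ∂P := by
  have expand (ω : Ω) : (a * f ω + b * g ω) ^ 2 =
      a ^ 2 * f ω ^ 2 + 2 * a * b * (f ω * g ω) + b ^ 2 * g ω ^ 2 := by ring
  have hff : Integrable (fun ω => a ^ 2 * f ω ^ 2) P := hf.integrable_sq.const_mul _
  have hfg : Integrable (fun ω => 2 * a * b * (f ω * g ω)) P :=
    (hf.integrable_mul hg).const_mul _
  have hgg : Integrable (fun ω => b ^ 2 * g ω ^ 2) P := hg.integrable_sq.const_mul _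
  simp_rw [expand]
  rw [integral_add _ hgg, integral_add hff hfg,
    integral_const_mul, integral_const_mul, integral_const_mul]
  exact hff.add hfg

end L2

/-- `s ↦ X s` is Bochner integrable as an `L²(P)`-valued map. -/
structure IntegrableL2Process {S Ω : Type*} [MeasurableSpace S] [MeasurableSpace Ω]
    (X : S → Ω → ℝ) (μ : Measure S) (P : Measure Ω) : Prop where
  measurable : Measurable fun p : S × Ω => X p.1 p.2
  memLp : ∀ᵐ s ∂μ, MemLp (X s) 2 P
  integrable_sqrt_integral_sq : Integrable (fun s => √(∫ ω, X s ω ^ 2 ∂P)) μ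

namespace IntegrableL2Process

variable {S T Ω : Type*} [MeasurableSpace S] [MeasurableSpace T] [MeasurableSpace Ω]
  {μ : Measure S} {ν : Measure T} {P : Measure Ω} {X : S → Ω → ℝ} {Y : T → Ω → ℝ}

theorem dirac [MeasurableSingletonClass S] (hX : Measurable fun p : S × Ω => X p.1 p.2) (a : S)
    (ha : MemLp (X a) 2 P) : IntegrableL2Process X (Measure.dirac a) P where
  measurable := hX
  memLp := by rw [ae_dirac_eq]; exact ha
  integrable_sqrt_integral_sq := integrable_dirac enorm_lt_top

theorem integrable_uncurry [IsProbabilityMeasure P] (hX : IntegrableL2Process X μ P) :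
    Integrable (fun p : S × Ω => X p.1 p.2) (μ.prod P) := by
  refine (integrable_prod_iff hX.measurable.aestronglyMeasurable).2
    ⟨hX.memLp.mono fun s hs => hs.integrable one_le_two, ?_⟩
  refine hX.integrable_sqrt_integral_sq.mono'
    hX.measurable.norm.stronglyMeasurable.integral_prod_right'.aestronglyMeasurable ?_
  filter_upwards [hX.memLp] with s hs
  rw [Real.norm_of_nonneg (integral_nonneg fun _ => norm_nonneg _)]
  exact integral_abs_le_sqrt_integral_sq hs

theorem integral_integral_swap [SFinite μ] [IsProbabilityMeasure P]
    (hX : IntegrableL2Process X μ P) :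
    ∫ ω, ∫ s, X s ω ∂μ ∂P = ∫ s, ∫ ω, X s ω ∂P ∂μ :=
  (MeasureTheory.integral_integral_swap hX.integrable_uncurry).symm

variable [SFinite P]

theorem integrable_mul (hX : IntegrableL2Process X μ P) (hY : IntegrableL2Process Y ν P) :
    Integrable (fun p : (S × T) × Ω => X p.1.1 p.2 * Y p.1.2 p.2) ((μ.prod ν).prod P) := by
  have hmeas : Measurable fun p : (S × T) × Ω => X p.1.1 p.2 * Y p.1.2 p.2 :=
    (hX.measurable.comp (measurable_fst.fst.prodMk measurable_snd)).mul
      (hY.measurable.comp (measurable_fst.snd.prodMk measurable_snd))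
  refine (integrable_prod_iff hmeas.aestronglyMeasurable).2 ⟨?_, ?_⟩
  · filter_upwards [Measure.quasiMeasurePreserving_fst.ae hX.memLp,
      Measure.quasiMeasurePreserving_snd.ae hY.memLp] with z hXz hYz
    exact hXz.integrable_mul hYz
  · refine (hX.integrable_sqrt_integral_sq.mul_prod hY.integrable_sqrt_integral_sq).mono'
      hmeas.norm.stronglyMeasurable.integral_prod_right'.aestronglyMeasurable ?_
    filter_upwards [Measure.quasiMeasurePreserving_fst.ae hX.memLp,
      Measure.quasiMeasurePreserving_snd.ae hY.memLp] with z hXz hYz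
    rw [Real.norm_of_nonneg (integral_nonneg fun _ => norm_nonneg _)]
    exact integral_abs_mul_le_sqrt_mul_sqrt hXz hYz

variable [SFinite μ] [SFinite ν]

theorem integral_mul_integral (hX : IntegrableL2Process X μ P) (hY : IntegrableL2Process Y ν P) :
    ∫ ω, (∫ s, X s ω ∂μ) * (∫ t, Y t ω ∂ν) ∂P = ∫ s, ∫ t, ∫ ω, X s ω * Y t ω ∂P ∂ν ∂μ := by
  have h := hX.integrable_mul hY
  simp_rw [← integral_prod_mul]
  rw [← integral_prod_symm _ h, integral_prod _ h]
  exact integral_prod _ h.integral_prod_left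

theorem integrable_mul_integral (hX : IntegrableL2Process X μ P) (hY : IntegrableL2Process Y ν P) :
    Integrable (fun ω => (∫ s, X s ω ∂μ) * (∫ t, Y t ω ∂ν)) P := by
  simp_rw [← integral_prod_mul]
  exact (hX.integrable_mul hY).integral_prod_right

theorem memLp_integral (hX : IntegrableL2Process X μ P) :
    MemLp (fun ω => ∫ s, X s ω ∂μ) 2 P := by
  refine (memLp_two_iff_integrable_sq
    hX.measurable.stronglyMeasurable.integral_prod_left.aestronglyMeasurable).2 ?_
  simpa only [sq] using hX.integrable_mul_integral hX

end IntegrableL2Process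

theorem integrableOn_Ioc_rpow {r b : ℝ} (hr : -1 < r) (hb : 0 ≤ b) :
    IntegrableOn (fun x : ℝ => x ^ r) (Ioc 0 b) :=
  (intervalIntegrable_iff_integrableOn_Ioc_of_le hb).1
    (intervalIntegral.intervalIntegrable_rpow' hr)

theorem integral_Ioc_rpow {r b : ℝ} (hr : -1 < r) (hb : 0 ≤ b) :
    ∫ x in Ioc 0 b, x ^ r = b ^ (r + 1) / (r + 1) := by
  rw [← intervalIntegral.integral_of_le hb, integral_rpow (Or.inl hr),
    Real.zero_rpow (by linarith), sub_zero]

theorem integral_Ioc_rpow_mul_min {q s : ℝ} (hq : -2 < q) (hq₁ : q ≠ -1) (hs₀ : 0 < s)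
    (hs₁ : s ≤ 1) :
    ∫ t in Ioc 0 1, t ^ q * min s t = s ^ (q + 2) / (q + 2) + s * (1 - s ^ (q + 1)) / (q + 1) := by
  have h0 : (0 : ℝ) ∉ uIcc s 1 := by
    rw [mem_uIcc]; rintro (⟨h, -⟩ | ⟨h, -⟩) <;> linarith
  have below : EqOn (fun t => t ^ q * min s t) (fun t => t ^ (q + 1)) (Ioc 0 s) :=
    fun t ht => by dsimp only; rw [min_eq_right ht.2, Real.rpow_add_one ht.1.ne']
  have above : EqOn (fun t => t ^ q * min s t) (fun t => t ^ q * s) (Ioc s 1) :=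
    fun t ht => by dsimp only; rw [min_eq_left ht.1.le]
  have int_above : IntegrableOn (fun t : ℝ => t ^ q * s) (Ioc s 1) :=
    (intervalIntegrable_iff_integrableOn_Ioc_of_le hs₁).1
      ((intervalIntegral.intervalIntegrable_rpow (Or.inr h0)).mul_const s)
  rw [← Ioc_union_Ioc_eq_Ioc hs₀.le hs₁, setIntegral_union (Ioc_disjoint_Ioc_of_le le_rfl)
      measurableSet_Ioc ((integrableOn_Ioc_rpow (by linarith) hs₀.le).congr_fun below.symm
      measurableSet_Ioc) (int_above.congr_fun above.symm measurableSet_Ioc),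
    setIntegral_congr_fun measurableSet_Ioc below, setIntegral_congr_fun measurableSet_Ioc above,
    integral_Ioc_rpow (by linarith) hs₀.le, integral_mul_const,
    ← intervalIntegral.integral_of_le hs₁, integral_rpow (Or.inr ⟨hq₁, h0⟩), Real.one_rpow]
  ring_nf

theorem integral_Ioc_integral_Ioc_rpow_mul_min {q : ℝ} (hq : -3 / 2 < q) (hq₁ : q ≠ -1) :
    ∫ s in Ioc 0 1, ∫ t in Ioc 0 1, s ^ q * t ^ q * min s t = 2 / ((q + 2) * (2 * q + 3)) := by
  have hq₁' : q + 1 ≠ 0 := fun h => hq₁ (by linarith)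
  have inner : EqOn (fun s => ∫ t in Ioc 0 1, s ^ q * t ^ q * min s t)
      (fun s => (1 / (q + 2) - 1 / (q + 1)) * s ^ (2 * q + 2) + 1 / (q + 1) * s ^ (q + 1))
      (Ioc 0 1) := fun s hs => by
    have h1 : s ^ (q + 1) = s ^ q * s := Real.rpow_add_one hs.1.ne' q
    have h2 : s ^ (q + 2) = s ^ q * s ^ 2 := by rw [Real.rpow_add hs.1, Real.rpow_two]
    have h3 : s ^ (2 * q + 2) = s ^ q * s ^ (q + 2) := by rw [← Real.rpow_add hs.1]; ring_nf
    simp only [mul_assoc, integral_const_mul, integral_Ioc_rpow_mul_min (by linarith) hq₁ hs.1 hs.2]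
    rw [h3, h2, h1]
    field_simp
    ring
  rw [setIntegral_congr_fun measurableSet_Ioc inner, integral_add
      ((integrableOn_Ioc_rpow (by linarith) zero_le_one).const_mul _)
      ((integrableOn_Ioc_rpow (by linarith) zero_le_one).const_mul _),
    integral_const_mul, integral_const_mul, integral_Ioc_rpow (by linarith) zero_le_one,
    integral_Ioc_rpow (by linarith) zero_le_one, Real.one_rpow, Real.one_rpow,
    show 2 * q + 2 + 1 = 2 * q + 3 by ring, show q + 1 + 1 = q + 2 by ring]
  have : q + 2 ≠ 0 := by intro h; linarith
  have : q * 2 + 3 ≠ 0 := by intro h; linarith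
  field_simp
  ring

structure HasWienerMoments {Ω : Type*} [MeasurableSpace Ω] (W : ℝ → Ω → ℝ) (P : Measure Ω) :
    Prop where
  measurable : Measurable fun p : ℝ × Ω => W p.1 p.2
  memLp : ∀ s ∈ Icc (0 : ℝ) 1, MemLp (W s) 2 P
  integral_eq_zero : ∀ s ∈ Icc (0 : ℝ) 1, ∫ ω, W s ω ∂P = 0
  integral_mul_eq_min : ∀ s ∈ Icc (0 : ℝ) 1, ∀ t ∈ Icc (0 : ℝ) 1, ∫ ω, W s ω * W t ω ∂P = min s t

namespace HasWienerMoments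

variable {Ω : Type*} [MeasurableSpace Ω] {P : Measure Ω} {W : ℝ → Ω → ℝ} {q : ℝ}

theorem integral_sq (hW : HasWienerMoments W P) {s : ℝ} (hs : s ∈ Icc (0 : ℝ) 1) :
    ∫ ω, W s ω ^ 2 ∂P = s := by
  simpa only [sq, min_self] using hW.integral_mul_eq_min s hs s hs

theorem integrableL2Process_rpow_mul (hW : HasWienerMoments W P) (hq : -3 / 2 < q) :
    IntegrableL2Process (fun s ω => s ^ q * W s ω) (volume.restrict (Ioc 0 1)) P where
  measurable := (measurable_fst.pow_const q).mul hW.measurable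
  memLp := by
    filter_upwards [ae_restrict_mem measurableSet_Ioc] with s hs
    exact (hW.memLp s (Ioc_subset_Icc_self hs)).const_mul _
  integrable_sqrt_integral_sq := by
    refine (integrableOn_Ioc_rpow (r := q + 1 / 2) (by linarith) zero_le_one).congr_fun
      (fun s hs => ?_) measurableSet_Ioc
    simp only [mul_pow, integral_const_mul, hW.integral_sq (Ioc_subset_Icc_self hs)]
    rw [Real.sqrt_mul (sq_nonneg _), Real.sqrt_sq (Real.rpow_nonneg hs.1.le q),
      Real.rpow_add hs.1, Real.sqrt_eq_rpow]

variable [IsProbabilityMeasure P]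

theorem integral_setIntegral_rpow_mul_eq_zero (hW : HasWienerMoments W P) (hq : -3 / 2 < q) :
    ∫ ω, (∫ s in Ioc 0 1, s ^ q * W s ω) ∂P = 0 := by
  rw [(hW.integrableL2Process_rpow_mul hq).integral_integral_swap]
  refine setIntegral_eq_zero_of_forall_eq_zero fun s hs => ?_
  rw [integral_const_mul, hW.integral_eq_zero s (Ioc_subset_Icc_self hs), mul_zero]

theorem integral_setIntegral_rpow_mul_mul_eval_one (hW : HasWienerMoments W P) (hq : -3 / 2 < q) :
    ∫ ω, (∫ s in Ioc 0 1, s ^ q * W s ω) * W 1 ω ∂P = 1 / (q + 2) := by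
  -- the cross moment is the case `ν = dirac 1` of `integral_mul_integral`
  have h := (hW.integrableL2Process_rpow_mul hq).integral_mul_integral
    (IntegrableL2Process.dirac hW.measurable 1 (hW.memLp 1 (right_mem_Icc.2 zero_le_one)))
  simp only [integral_dirac] at h
  rw [h, setIntegral_congr_fun measurableSet_Ioc (g := fun s => s ^ (q + 1)) fun s hs => ?_,
    integral_Ioc_rpow (by linarith) zero_le_one, Real.one_rpow]
  · ring_nf
  · simp only [mul_assoc, integral_const_mul,
      hW.integral_mul_eq_min s (Ioc_subset_Icc_self hs) 1 (right_mem_Icc.2 zero_le_one),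
      min_eq_left hs.2, Real.rpow_add_one hs.1.ne']

theorem integral_setIntegral_rpow_mul_sq (hW : HasWienerMoments W P) (hq : -3 / 2 < q)
    (hq₁ : q ≠ -1) :
    ∫ ω, (∫ s in Ioc 0 1, s ^ q * W s ω) ^ 2 ∂P = 2 / ((q + 2) * (2 * q + 3)) := by
  have hX := hW.integrableL2Process_rpow_mul hq
  simp only [sq]
  rw [hX.integral_mul_integral hX, ← integral_Ioc_integral_Ioc_rpow_mul_min hq hq₁]
  refine setIntegral_congr_fun measurableSet_Ioc fun s hs => ?_
  refine setIntegral_congr_fun measurableSet_Ioc fun t ht => ?_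
  rw [← hW.integral_mul_eq_min s (Ioc_subset_Icc_self hs) t (Ioc_subset_Icc_self ht),
    ← integral_const_mul]
  congr 1 with ω
  ring

end HasWienerMoments

/-- With `0 < γ₁ < γ₂`, `γ = γ₁γ₂/(γ₁+γ₂)`, and `W` a centered jointly
measurable process on `[0,1]` with covariance `min s t`, the random variable
`Z = (γ₁γ₂/(γ₁+γ₂)²) ∫₀¹ s^(-γ/γ₂-1) W s ds + (γ₂/(γ₁+γ₂)) W 1` is centered,
square-integrable, and `E[Z²] = γ₂²/(γ₂² - γ₁²)`. -/
theorem stmt_7 (γ₁ γ₂ γ : ℝ) (hγ₁ : 0 < γ₁) (hγ₁₂ : γ₁ < γ₂)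
    (hγ : γ = γ₁ * γ₂ / (γ₁ + γ₂))
    {Ω : Type*} [MeasurableSpace Ω] (P : Measure Ω) [IsProbabilityMeasure P]
    (W : ℝ → Ω → ℝ)
    (hWmeas : Measurable (fun p : ℝ × Ω => W p.1 p.2))
    (hWL2 : ∀ s ∈ Icc (0 : ℝ) 1, MemLp (W s) 2 P)
    (hWcentered : ∀ s ∈ Icc (0 : ℝ) 1, (∫ ω, W s ω ∂P) = 0)
    (hWcov : ∀ s ∈ Icc (0 : ℝ) 1, ∀ t ∈ Icc (0 : ℝ) 1,
      (∫ ω, W s ω * W t ω ∂P) = min s t)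
    (Z : Ω → ℝ)
    (hZ : ∀ ω, Z ω = γ₁ * γ₂ / (γ₁ + γ₂) ^ 2 *
        (∫ s in Ioc (0 : ℝ) 1, s ^ (-γ / γ₂ - 1) * W s ω) +
      γ₂ / (γ₁ + γ₂) * W 1 ω) :
    (∫ ω, Z ω ∂P) = 0 ∧ MemLp Z 2 P ∧
      (∫ ω, Z ω ^ 2 ∂P) = γ₂ ^ 2 / (γ₂ ^ 2 - γ₁ ^ 2) := by
  have hW : HasWienerMoments W P := ⟨hWmeas, hWL2, hWcentered, hWcov⟩
  have h1 : (1 : ℝ) ∈ Icc (0 : ℝ) 1 := right_mem_Icc.2 zero_le_one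
  have hγ₂ : 0 < γ₂ := hγ₁.trans hγ₁₂
  set q := -γ / γ₂ - 1
  have hq : q + 2 = γ₂ / (γ₁ + γ₂) := by simp only [q, hγ]; field_simp; ring
  have h2q3 : 2 * q + 3 = (γ₂ - γ₁) / (γ₁ + γ₂) := by
    rw [show 2 * q + 3 = 2 * (q + 2) - 1 by ring, hq]; field_simp; ring
  have hq_gt : -3 / 2 < q := by
    have : 1 / 2 < γ₂ / (γ₁ + γ₂) := by rw [lt_div_iff₀ (by linarith)]; linarith
    linarith
  have hq_ne : q ≠ -1 := by
    have : γ₂ / (γ₁ + γ₂) < 1 := (div_lt_one (by linarith)).2 (by linarith)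
    exact (by linarith : q < -1).ne
  have hG := (hW.integrableL2Process_rpow_mul hq_gt).memLp_integral
  have hZ' : Z = fun ω => γ₁ * γ₂ / (γ₁ + γ₂) ^ 2 * (∫ s in Ioc (0 : ℝ) 1, s ^ q * W s ω) +
      γ₂ / (γ₁ + γ₂) * W 1 ω := funext hZ
  subst hZ'
  refine ⟨?_, (hG.const_mul _).add ((hWL2 1 h1).const_mul _), ?_⟩
  · rw [integral_add ((hG.integrable one_le_two).const_mul _)
        (((hWL2 1 h1).integrable one_le_two).const_mul _), integral_const_mul, integral_const_mul,
      hW.integral_setIntegral_rpow_mul_eq_zero hq_gt, hWcentered 1 h1]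
    ring
  · rw [integral_const_mul_add_const_mul_sq hG (hWL2 1 h1),
      hW.integral_setIntegral_rpow_mul_sq hq_gt hq_ne,
      hW.integral_setIntegral_rpow_mul_mul_eval_one hq_gt, hW.integral_sq h1, h2q3, hq]
    have : γ₂ - γ₁ ≠ 0 := by linarith
    have : γ₂ ^ 2 - γ₁ ^ 2 ≠ 0 := by nlinarith
    field_simp
    ring
end

section
/- Let (Ω, 𝓐, P) be a probability space and W : [0,1] × Ω → ℝ a jointly measurable stochastic process such that W_s is integrable with E|W_s| ≤ s^{1/2} for every s ∈ [0,1]. Let (T_n) be a sequence of random variables taking values in [0,1] with T_n → 1 in probability. Then the random variables I_n := ∫_{T_n}^{1} s^{−1} W_s ds converge to 0 in probability as n → ∞. -/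
/-!
Since `E|W_s| ≤ s^{1/2}`, Tonelli gives `E ∫₀¹ s⁻¹ |W_s| ds ≤ ∫₀¹ s^{-1/2} ds < ∞`, so the tails
`A_δ = ∫_{1-δ}^1 s⁻¹ |W_s| ds` satisfy `E A_δ → 0` as `δ → 0⁺`. On the event `|T_n - 1| < δ` we have
`|I_n| ≤ A_δ`, hence by Markov's inequality `P(|I_n| ≥ ε) ≤ P(|T_n - 1| ≥ δ) + E A_δ / ε`, and both
terms are small for small `δ` and large `n`.
-/

open Filter Set MeasureTheory

open scoped ENNReal Topology

theorem tendstoInMeasure_zero_of_enorm_le_of_tendstoInMeasure {α ι E F : Type*}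
    [MeasurableSpace α] {μ : Measure α} {l : Filter ι} [NormedAddCommGroup E]
    [PseudoMetricSpace F] {X : ι → α → E} {Y : ι → α → F} {g : α → F} (G : ℝ → α → ℝ≥0∞)
    (hY : TendstoInMeasure μ Y l g) (hG : ∀ δ, 0 < δ → AEMeasurable (G δ) μ)
    (hG_lim : Tendsto (fun δ => ∫⁻ x, G δ x ∂μ) (𝓝[>] 0) (𝓝 0))
    (hXG : ∀ δ, 0 < δ → ∀ i x, dist (Y i x) (g x) < δ → ‖X i x‖ₑ ≤ G δ x) :
    TendstoInMeasure μ X l 0 := by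
  rw [tendstoInMeasure_iff_enorm]
  intro ε hε hε_top
  simp only [Pi.zero_apply, sub_zero]
  refine ENNReal.tendsto_nhds_zero.2 fun η hη => ?_
  have hη2 : 0 < η / 2 := ENNReal.half_pos hη.ne'
  have hG_div : Tendsto (fun δ => (∫⁻ x, G δ x ∂μ) / ε) (𝓝[>] 0) (𝓝 0) := by
    simpa using ENNReal.Tendsto.div_const hG_lim (Or.inr hε.ne')
  obtain ⟨δ, hGδ, hδ⟩ :=
    ((tendsto_order.1 hG_div).2 _ hη2 |>.and self_mem_nhdsWithin).exists
  filter_upwards [ENNReal.tendsto_nhds_zero.1 (tendstoInMeasure_iff_dist.1 hY δ hδ) _ hη2]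
    with i hi
  have hsub : {x | ε ≤ ‖X i x‖ₑ} ⊆ {x | δ ≤ dist (Y i x) (g x)} ∪ {x | ε ≤ G δ x} := by
    intro x hx
    rcases le_or_gt δ (dist (Y i x) (g x)) with h | h
    · exact Or.inl h
    · exact Or.inr (hx.trans (hXG δ hδ i x h))
  calc μ {x | ε ≤ ‖X i x‖ₑ}
      ≤ μ {x | δ ≤ dist (Y i x) (g x)} + μ {x | ε ≤ G δ x} :=
        (measure_mono hsub).trans (measure_union_le _ _)
    _ ≤ η / 2 + η / 2 :=
        add_le_add hi ((meas_ge_le_lintegral_div (hG δ hδ) hε.ne' hε_top).trans hGδ.le)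
    _ = η := ENNReal.add_halves η

theorem tendsto_lintegral_setLIntegral_Ioc_sub {Ω : Type*} [MeasurableSpace Ω]
    {P : Measure Ω} [SFinite P] {f : ℝ → Ω → ℝ≥0∞} (hf : Measurable (Function.uncurry f))
    {a b : ℝ} (hab : a < b) (hfin : ∫⁻ s in Ioc a b, ∫⁻ ω, f s ω ∂P ≠ ∞) :
    Tendsto (fun δ => ∫⁻ ω, (∫⁻ s in Ioc (b - δ) b, f s ω) ∂P) (𝓝[>] 0) (𝓝 0) := by
  have hswap : ∀ δ, ∫⁻ ω, (∫⁻ s in Ioc (b - δ) b, f s ω) ∂P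
      = ∫⁻ s in Ioc (b - δ) b, ∫⁻ ω, f s ω ∂P := fun δ =>
    lintegral_lintegral_swap (hf.comp measurable_swap).aemeasurable
  have hvol : Tendsto (fun δ => volume.restrict (Ioc a b) (Ioc (b - δ) b)) (𝓝[>] 0) (𝓝 0) := by
    refine tendsto_of_tendsto_of_tendsto_of_le_of_le tendsto_const_nhds ?_ (fun _ => zero_le)
      fun δ => Measure.restrict_apply_le _ _
    simp only [Real.volume_Ioc, sub_sub_cancel]
    simpa using (ENNReal.continuous_ofReal.tendsto 0).mono_left nhdsWithin_le_nhds
  refine (tendsto_setLIntegral_zero hfin hvol).congr' ?_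
  filter_upwards [Ioo_mem_nhdsGT (sub_pos.2 hab)] with δ hδ
  rw [hswap, Measure.restrict_restrict measurableSet_Ioc,
    inter_eq_left.2 (Ioc_subset_Ioc_left (by linarith [hδ.2]))]

theorem tendstoInMeasure_setIntegral_Ioc_zero {Ω ι E : Type*} [MeasurableSpace Ω]
    {P : Measure Ω} [SFinite P] [NormedAddCommGroup E] [NormedSpace ℝ E] [MeasurableSpace E]
    [OpensMeasurableSpace E] {f : ℝ → Ω → E} (hf : Measurable (Function.uncurry f))
    {a b : ℝ} (hab : a < b) (hfin : ∫⁻ s in Ioc a b, ∫⁻ ω, ‖f s ω‖ₑ ∂P ≠ ∞)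
    {l : Filter ι} {T : ι → Ω → ℝ} (hT : TendstoInMeasure P T l (fun _ => b)) :
    TendstoInMeasure P (fun i ω => ∫ s in Ioc (T i ω) b, f s ω) l 0 := by
  have hf_enorm : Measurable (Function.uncurry fun s ω => ‖f s ω‖ₑ) := hf.enorm
  refine tendstoInMeasure_zero_of_enorm_le_of_tendstoInMeasure
    (fun δ ω => ∫⁻ s in Ioc (b - δ) b, ‖f s ω‖ₑ) hT
    (fun δ _ => (hf_enorm.lintegral_prod_left).aemeasurable)
    (tendsto_lintegral_setLIntegral_Ioc_sub hf_enorm hab hfin) fun δ _ i ω hTδ => ?_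
  have hTb : b - δ ≤ T i ω := by linarith [(abs_sub_lt_iff.1 (Real.dist_eq _ _ ▸ hTδ)).2]
  exact (enorm_integral_le_lintegral_enorm _).trans (lintegral_mono_set (Ioc_subset_Ioc_left hTb))

theorem lintegral_enorm_inv_mul_le_rpow {Ω : Type*} [MeasurableSpace Ω] {P : Measure Ω}
    {X : Ω → ℝ} (hX : Integrable X P) {s : ℝ} (hs : 0 < s)
    (hXs : ∫ ω, |X ω| ∂P ≤ s ^ ((1 : ℝ) / 2)) :
    ∫⁻ ω, ‖s⁻¹ * X ω‖ₑ ∂P ≤ ENNReal.ofReal (s ^ (-(1 : ℝ) / 2)) := by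
  calc ∫⁻ ω, ‖s⁻¹ * X ω‖ₑ ∂P = ‖s⁻¹‖ₑ * ∫⁻ ω, ‖X ω‖ₑ ∂P := by
        simp_rw [enorm_mul]; exact lintegral_const_mul' _ _ enorm_ne_top
    _ = ENNReal.ofReal (s⁻¹ * ∫ ω, |X ω| ∂P) := by
        rw [← ofReal_integral_norm_eq_lintegral_enorm hX, ← ofReal_norm,
          ← ENNReal.ofReal_mul (norm_nonneg _)]
        simp [Real.norm_eq_abs, abs_of_pos hs]
    _ ≤ ENNReal.ofReal (s⁻¹ * s ^ ((1 : ℝ) / 2)) := by gcongr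
    _ = ENNReal.ofReal (s ^ (-(1 : ℝ) / 2)) := by
        rw [← Real.rpow_neg_one, ← Real.rpow_add hs]; norm_num

theorem stmt_9_general {Ω : Type*} [MeasurableSpace Ω] (P : Measure Ω) [IsProbabilityMeasure P]
    (W : ℝ → Ω → ℝ)
    (hWmeas : Measurable (fun p : ℝ × Ω => W p.1 p.2))
    (hWint : ∀ s ∈ Icc (0 : ℝ) 1, Integrable (W s) P)
    (hWbound : ∀ s ∈ Icc (0 : ℝ) 1, (∫ ω, |W s ω| ∂P) ≤ s ^ ((1 : ℝ) / 2))
    (T : ℕ → Ω → ℝ)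
    (hTconv : TendstoInMeasure P T atTop (fun _ => (1 : ℝ)))
    (I : ℕ → Ω → ℝ)
    (hI : ∀ n ω, I n ω = ∫ s in Ioc (T n ω) 1, s⁻¹ * W s ω) :
    TendstoInMeasure P I atTop (fun _ => (0 : ℝ)) := by
  obtain rfl : I = fun n ω => ∫ s in Ioc (T n ω) 1, s⁻¹ * W s ω := funext₂ hI
  have hrpow : ∫⁻ s in Ioc 0 1, ENNReal.ofReal (s ^ (-(1 : ℝ) / 2)) < ∞ :=
    (intervalIntegral.intervalIntegrable_rpow' (by norm_num)).1.setLIntegral_lt_top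
  refine tendstoInMeasure_setIntegral_Ioc_zero (measurable_fst.inv.mul hWmeas) zero_lt_one
    (ne_top_of_le_ne_top hrpow.ne (setLIntegral_mono' measurableSet_Ioc fun s hs => ?_)) hTconv
  exact lintegral_enorm_inv_mul_le_rpow (hWint s (Ioc_subset_Icc_self hs)) hs.1
    (hWbound s (Ioc_subset_Icc_self hs))

/-- Let `W : [0,1] × Ω → ℝ` be jointly measurable with each `W s`
integrable and `E|W s| ≤ s^(1/2)`, and let `T n` be random variables with values in
`[0,1]` converging to `1` in probability. Then `I n = ∫_(T n)^1 s⁻¹ W s ds` converges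
to `0` in probability. -/
theorem stmt_9 {Ω : Type*} [MeasurableSpace Ω] (P : Measure Ω) [IsProbabilityMeasure P]
    (W : ℝ → Ω → ℝ)
    (hWmeas : Measurable (fun p : ℝ × Ω => W p.1 p.2))
    (hWint : ∀ s ∈ Icc (0 : ℝ) 1, Integrable (W s) P)
    (hWbound : ∀ s ∈ Icc (0 : ℝ) 1, (∫ ω, |W s ω| ∂P) ≤ s ^ ((1 : ℝ) / 2))
    (T : ℕ → Ω → ℝ)
    (hTmeas : ∀ n, Measurable (T n))
    (hTrange : ∀ n ω, T n ω ∈ Icc (0 : ℝ) 1)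
    (hTconv : TendstoInMeasure P T atTop (fun _ => (1 : ℝ)))
    (I : ℕ → Ω → ℝ)
    (hI : ∀ n ω, I n ω = ∫ s in Ioc (T n ω) 1, s⁻¹ * W s ω) :
    TendstoInMeasure P I atTop (fun _ => (0 : ℝ)) :=
  stmt_9_general P W hWmeas hWint hWbound T hTconv I hI
end

section
/- Let X and Y be independent real-valued random variables on a probability space (Ω, 𝓐, P), let 𝐅(x) := P(X ≤ x), let 𝐆(y) := P(Y ≤ y) be continuous, and assume p := P(X ≤ Y) > 0. Define C(x) := P(X ≤ x and x ≤ Y | X ≤ Y). Then for every x ∈ ℝ, C(x) = p^{−1} 𝐅(x)(1 − 𝐆(x)), and moreover C(x) = F(x) − G(x), where F(x) := P(X ≤ x | X ≤ Y) and G(x) := P(Y ≤ x | X ≤ Y). -/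
open Filter Set MeasureTheory ProbabilityTheory

/-! Continuity of `G` means the law of `Y` has no atoms, so `{Y = x}` is null. Up to that null set,
`{x ≤ Y}` is the complement of `{Y ≤ x}`, and `{X ≤ x, X ≤ Y}` splits into `{X ≤ x ≤ Y}` and
`{Y ≤ x, X ≤ Y}` (the latter already forces `X ≤ x`). Independence factors
`P(X ≤ x ≤ Y) = F x * (1 - G x)`. -/

theorem measure_singleton_eq_zero_of_continuousAt_cdf {μ : Measure ℝ} [IsProbabilityMeasure μ]
    {x : ℝ} (h : ContinuousAt (cdf μ) x) : μ {x} = 0 := by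
  rw [← measure_cdf μ, StieltjesFunction.measure_singleton,
    h.continuousWithinAt.leftLim_eq, sub_self, ENNReal.ofReal_zero]

section

variable {Ω : Type*} [MeasurableSpace Ω] {P : Measure Ω} {X Y : Ω → ℝ} {x : ℝ}

theorem ae_ne_of_continuousAt_cdf [IsProbabilityMeasure P] (hY : Measurable Y)
    (h : ContinuousAt (fun y ↦ P.real {ω | Y ω ≤ y}) x) : ∀ᵐ ω ∂P, Y ω ≠ x := by
  have := Measure.isProbabilityMeasure_map (μ := P) hY.aemeasurable
  have hcdf : cdf (P.map Y) = fun y ↦ P.real {ω | Y ω ≤ y} := by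
    ext y
    rw [cdf_eq_real, map_measureReal_apply hY measurableSet_Iic]
    rfl
  have hatom := measure_singleton_eq_zero_of_continuousAt_cdf (hcdf ▸ h)
  rw [Measure.map_apply hY (measurableSet_singleton x)] at hatom
  exact measure_eq_zero_iff_ae_notMem.mp hatom

theorem measureReal_ge_eq_one_sub_measureReal_le [IsProbabilityMeasure P] (hY : Measurable Y)
    (hx : ∀ᵐ ω ∂P, Y ω ≠ x) : P.real {ω | x ≤ Y ω} = 1 - P.real {ω | Y ω ≤ x} := by
  have hae : ({ω | x ≤ Y ω} : Set Ω) =ᵐ[P] ({ω | Y ω ≤ x}ᶜ : Set Ω) := eventuallyEq_set.mpr <| by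
    filter_upwards [hx] with ω hω
    simp only [mem_ofPred_eq, mem_compl_iff, not_le]
    exact ⟨fun h ↦ lt_of_le_of_ne h hω.symm, le_of_lt⟩
  rw [measureReal_congr hae, probReal_compl_eq_one_sub (measurableSet_le hY measurable_const)]

theorem measureReal_le_le_and_le_eq_sub [IsFiniteMeasure P] (hX : Measurable X)
    (hY : Measurable Y) (hx : ∀ᵐ ω ∂P, Y ω ≠ x) :
    P.real {ω | (X ω ≤ x ∧ x ≤ Y ω) ∧ X ω ≤ Y ω}
      = P.real {ω | X ω ≤ x ∧ X ω ≤ Y ω} - P.real {ω | Y ω ≤ x ∧ X ω ≤ Y ω} := by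
  have hsub : {ω | Y ω ≤ x ∧ X ω ≤ Y ω} ⊆ {ω | X ω ≤ x ∧ X ω ≤ Y ω} :=
    fun ω ⟨hYx, hXY⟩ ↦ ⟨hXY.trans hYx, hXY⟩
  have hae : ({ω | (X ω ≤ x ∧ x ≤ Y ω) ∧ X ω ≤ Y ω} : Set Ω)
      =ᵐ[P] ({ω | X ω ≤ x ∧ X ω ≤ Y ω} \ {ω | Y ω ≤ x ∧ X ω ≤ Y ω} : Set Ω) :=
    eventuallyEq_set.mpr <| by
      filter_upwards [hx] with ω hω
      simp only [mem_ofPred_eq, Set.mem_sdiff]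
      constructor
      · rintro ⟨⟨hXx, hxY⟩, hXY⟩
        exact ⟨⟨hXx, hXY⟩, fun ⟨hYx, _⟩ ↦ hω (le_antisymm hYx hxY)⟩
      · rintro ⟨⟨hXx, hXY⟩, hnot⟩
        exact ⟨⟨hXx, le_of_not_ge fun hYx ↦ hnot ⟨hYx, hXY⟩⟩, hXY⟩
  rw [measureReal_congr hae,
    measureReal_sdiff hsub ((measurableSet_le hY measurable_const).inter (measurableSet_le hX hY))]

theorem ProbabilityTheory.IndepFun.measureReal_le_and_ge_eq_mul (hXY : IndepFun X Y P) :
    P.real {ω | (X ω ≤ x ∧ x ≤ Y ω) ∧ X ω ≤ Y ω}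
      = P.real {ω | X ω ≤ x} * P.real {ω | x ≤ Y ω} := by
  have hset : {ω | (X ω ≤ x ∧ x ≤ Y ω) ∧ X ω ≤ Y ω} = X ⁻¹' Iic x ∩ Y ⁻¹' Ici x := by
    ext ω
    simp only [mem_ofPred_eq, mem_inter_iff, mem_preimage, mem_Iic, mem_Ici]
    exact ⟨And.left, fun h ↦ ⟨h, h.1.trans h.2⟩⟩
  rw [hset, measureReal_def,
    hXY.measure_inter_preimage_eq_mul _ _ measurableSet_Iic measurableSet_Ici, ENNReal.toReal_mul]
  rfl

end

theorem stmt_11_general {Ω : Type*} [MeasurableSpace Ω] (P : Measure Ω) [IsProbabilityMeasure P]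
    (X Y : Ω → ℝ) (hX : Measurable X) (hY : Measurable Y)
    (hindep : IndepFun X Y P)
    (F G : ℝ → ℝ)
    (hF : ∀ x, F x = (P {ω | X ω ≤ x}).toReal)
    (hG : ∀ y, G y = (P {ω | Y ω ≤ y}).toReal)
    (hGcont : Continuous G)
    (p : ℝ)
    (C Fobs Gobs : ℝ → ℝ)
    (hC : ∀ x, C x = (P {ω | (X ω ≤ x ∧ x ≤ Y ω) ∧ X ω ≤ Y ω}).toReal / p)
    (hFobs : ∀ x, Fobs x = (P {ω | X ω ≤ x ∧ X ω ≤ Y ω}).toReal / p)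
    (hGobs : ∀ x, Gobs x = (P {ω | Y ω ≤ x ∧ X ω ≤ Y ω}).toReal / p) :
    ∀ x : ℝ, C x = p⁻¹ * (F x * (1 - G x)) ∧ C x = Fobs x - Gobs x := by
  intro x
  have hG_eq : G = fun y ↦ P.real {ω | Y ω ≤ y} := funext hG
  have hatom : ∀ᵐ ω ∂P, Y ω ≠ x := ae_ne_of_continuousAt_cdf hY (hG_eq ▸ hGcont.continuousAt)
  constructor
  · simp only [hC, hF, hG, ← measureReal_def]
    rw [hindep.measureReal_le_and_ge_eq_mul, measureReal_ge_eq_one_sub_measureReal_le hY hatom]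
    ring
  · rw [hC, hFobs, hGobs, ← sub_div]
    exact congrArg (· / p) (measureReal_le_le_and_le_eq_sub hX hY hatom)

/-- Let `X`, `Y` be independent real random variables on `(Ω, 𝓐, P)`,
`F x = P(X ≤ x)`, `G y = P(Y ≤ y)` continuous, `p = P(X ≤ Y) > 0`, and
`C x = P(X ≤ x ∧ x ≤ Y ∣ X ≤ Y)`. Then `C x = p⁻¹ F x (1 - G x)` and
`C x = Fobs x - Gobs x` where `Fobs x = P(X ≤ x ∣ X ≤ Y)` and
`Gobs x = P(Y ≤ x ∣ X ≤ Y)`. -/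
theorem stmt_11 {Ω : Type*} [MeasurableSpace Ω] (P : Measure Ω) [IsProbabilityMeasure P]
    (X Y : Ω → ℝ) (hX : Measurable X) (hY : Measurable Y)
    (hindep : IndepFun X Y P)
    (F G : ℝ → ℝ)
    (hF : ∀ x, F x = (P {ω | X ω ≤ x}).toReal)
    (hG : ∀ y, G y = (P {ω | Y ω ≤ y}).toReal)
    (hGcont : Continuous G)
    (p : ℝ) (hp : p = (P {ω | X ω ≤ Y ω}).toReal) (hppos : 0 < p)
    (C Fobs Gobs : ℝ → ℝ)
    (hC : ∀ x, C x = (P {ω | (X ω ≤ x ∧ x ≤ Y ω) ∧ X ω ≤ Y ω}).toReal / p)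
    (hFobs : ∀ x, Fobs x = (P {ω | X ω ≤ x ∧ X ω ≤ Y ω}).toReal / p)
    (hGobs : ∀ x, Gobs x = (P {ω | Y ω ≤ x ∧ X ω ≤ Y ω}).toReal / p) :
    ∀ x : ℝ, C x = p⁻¹ * (F x * (1 - G x)) ∧ C x = Fobs x - Gobs x :=
  stmt_11_general P X Y hX hY hindep F G hF hG hGcont p C Fobs Gobs hC hFobs hGobs
end

section
/- Let γ₁, γ₂ > 0 and set γ := γ₁γ₂/(γ₁+γ₂). Let 𝐅 be a distribution function of a positive random variable (non-decreasing, right-continuous, lim_{x→−∞} 𝐅(x) = 0, lim_{x→∞} 𝐅(x) = 1) with Lebesgue–Stieltjes measure μ_𝐅, and suppose 𝐅̄ := 1 − 𝐅 is regularly varying at infinity with index −1/γ₁. Let 𝐆̄ : (0,∞) → (0,1] be non-increasing and regularly varying at infinity with index −1/γ₂, and let p > 0. Define F̄(x) := p^{−1} ∫_{(x,∞)} 𝐆̄(z) dμ_𝐅(z). Then F̄ is regularly varying at infinity with index −1/γ, i.e. for every s > 0, lim_{x→∞} F̄(sx)/F̄(x) = s^{−1/γ}. -/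
/-!
Write `T x = μ (x, ∞)` for the tail of `μ = dF` and `U x = ∫_(x,∞) Gbar dμ`. Cutting `(x, ∞)`
along the grid `x, qx, q²x, …` and bounding the antitone integrand on each piece by its values at
the endpoints sandwiches `U x / (Gbar x * T x)` between two Riemann–Stieltjes sums whose limits,
by regular variation, differ by the factor `q ^ (1/γ₂)` up to a tail of size `q ^ (-N/γ)`.
Letting `N → ∞` and then `q → 1` shows that this ratio has a positive limit, so `U` inherits the
index `-1/γ₂ - 1/γ₁ = -1/γ` of the product `Gbar * T`.
-/

open Filter Set MeasureTheory Topology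

def RegularlyVaryingAtTop (f : ℝ → ℝ) (ρ : ℝ) : Prop :=
  ∀ s > (0 : ℝ), Tendsto (fun x => f (s * x) / f x) atTop (𝓝 (s ^ ρ))

namespace RegularlyVaryingAtTop

variable {f f' : ℝ → ℝ} {ρ σ : ℝ}

theorem congr (hf : RegularlyVaryingAtTop f ρ) (h : f =ᶠ[atTop] f') :
    RegularlyVaryingAtTop f' ρ := fun s hs => by
  refine (hf s hs).congr' ?_
  filter_upwards [h, (tendsto_id.const_mul_atTop hs).eventually h] with x hx hsx
  exact congrArg₂ (· / ·) hsx hx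

theorem const_mul (hf : RegularlyVaryingAtTop f ρ) {c : ℝ} (hc : c ≠ 0) :
    RegularlyVaryingAtTop (fun x => c * f x) ρ := fun s hs =>
  (hf s hs).congr fun _ => (mul_div_mul_left _ _ hc).symm

theorem mul (hf : RegularlyVaryingAtTop f ρ) (hf' : RegularlyVaryingAtTop f' σ) :
    RegularlyVaryingAtTop (fun x => f x * f' x) (ρ + σ) := fun s hs => by
  rw [Real.rpow_add hs]
  exact ((hf s hs).mul (hf' s hs)).congr fun _ => (mul_div_mul_comm _ _ _ _).symm

theorem of_tendsto {L : ℝ} (h : Tendsto f atTop (𝓝 L)) (hL : L ≠ 0) :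
    RegularlyVaryingAtTop f 0 := fun s hs => by
  rw [Real.rpow_zero, ← div_self hL]
  exact (h.comp (tendsto_id.const_mul_atTop hs)).div h hL

theorem frequently_ne_zero (hf : RegularlyVaryingAtTop f ρ) : ∃ᶠ x in atTop, f x ≠ 0 := by
  refine fun h => (Real.rpow_pos_of_pos two_pos ρ).ne' <|
    tendsto_nhds_unique (hf 2 two_pos) (tendsto_const_nhds.congr' ?_)
  filter_upwards [h] with x hx
  rw [not_not.1 hx, div_zero]

theorem pos_of_antitone (hf : RegularlyVaryingAtTop f ρ) (h_anti : Antitone f)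
    (h_nonneg : 0 ≤ f) (x : ℝ) : 0 < f x := by
  obtain ⟨y, hy, hxy⟩ := (hf.frequently_ne_zero.and_eventually (eventually_ge_atTop x)).exists
  exact ((h_nonneg y).lt_of_ne' hy).trans_le (h_anti hxy)

theorem nonpos_of_antitone (hf : RegularlyVaryingAtTop f ρ) (h_anti : Antitone f)
    (h_nonneg : 0 ≤ f) : ρ ≤ 0 := by
  have h2 : (2 : ℝ) ^ ρ ≤ 1 := le_of_tendsto (hf 2 two_pos) <|
    (eventually_ge_atTop 0).mono fun x hx => div_le_one_of_le₀ (h_anti (by linarith)) (h_nonneg x)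
  by_contra! hρ
  exact (Real.one_lt_rpow one_lt_two hρ).not_ge h2

theorem tendsto_mul_sub (hf : RegularlyVaryingAtTop f ρ) (hf' : RegularlyVaryingAtTop f' σ)
    {a b c : ℝ} (ha : 0 < a) (hb : 0 < b) (hc : 0 < c) :
    Tendsto (fun x => f (c * x) / f x * ((f' (a * x) - f' (b * x)) / f' x)) atTop
      (𝓝 (c ^ ρ * (a ^ σ - b ^ σ))) :=
  (hf c hc).mul (((hf' a ha).sub (hf' b hb)).congr fun _ => (sub_div _ _ _).symm)

end RegularlyVaryingAtTop

theorem tendsto_liminf_of_limsup_le_rpow_mul {α : Type*} {l : Filter α} [l.NeBot] {f : α → ℝ}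
    {ρ : ℝ} (hle : IsBoundedUnder (· ≤ ·) l f) (hge : IsBoundedUnder (· ≥ ·) l f)
    (h : ∀ q > 1, limsup f l ≤ q ^ ρ * liminf f l) : Tendsto f l (𝓝 (liminf f l)) := by
  have hlim : Tendsto (fun q : ℝ => q ^ ρ * liminf f l) (𝓝[>] 1) (𝓝 (liminf f l)) := by
    simpa using ((Real.continuousAt_rpow_const 1 ρ (Or.inl one_ne_zero)).tendsto.mono_left
      nhdsWithin_le_nhds).mul_const (liminf f l)
  have hsup : limsup f l ≤ liminf f l := ge_of_tendsto hlim (eventually_nhdsWithin_of_forall h)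
  exact tendsto_of_liminf_eq_limsup rfl (le_antisymm hsup (liminf_le_limsup hle hge)) hle hge

section TailIntegral

variable {μ : Measure ℝ} {g : ℝ → ℝ}

theorem Antitone.integrableOn_Ioi [IsFiniteMeasure μ] (hg : Antitone g) (hg0 : 0 ≤ g) (x : ℝ) :
    IntegrableOn g (Ioi x) μ :=
  Measure.integrableOn_of_bounded (measure_ne_top μ _) hg.measurable.aestronglyMeasurable <|
    (ae_restrict_iff' measurableSet_Ioi).2 <| ae_of_all _ fun z hz => by
      rw [Real.norm_of_nonneg (hg0 z)]
      exact hg hz.le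

theorem Antitone.mul_measureReal_le_setIntegral [IsFiniteMeasure μ] (hg : Antitone g) {s : Set ℝ}
    {y : ℝ} (hs : MeasurableSet s) (hsy : s ⊆ Iic y) (hint : IntegrableOn g s μ) :
    g y * μ.real s ≤ ∫ z in s, g z ∂μ :=
  setIntegral_ge_of_const_le_real hs (measure_ne_top μ _) (fun _ hz => hg (hsy hz)) hint

theorem Antitone.setIntegral_le_mul_measureReal [IsFiniteMeasure μ] (hg : Antitone g) {s : Set ℝ}
    {x : ℝ} (hs : MeasurableSet s) (hsx : s ⊆ Ici x) (hint : IntegrableOn g s μ) :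
    ∫ z in s, g z ∂μ ≤ g x * μ.real s := by
  calc ∫ z in s, g z ∂μ ≤ ∫ _ in s, g x ∂μ :=
        setIntegral_mono_on hint (integrableOn_const (measure_ne_top μ _)) hs
          fun _ hz => hg (hsx hz)
    _ = g x * μ.real s := by rw [setIntegral_const, smul_eq_mul, mul_comm]

theorem measureReal_Ioc_eq_sub [IsFiniteMeasure μ] {a b : ℝ} (hab : a ≤ b) :
    μ.real (Ioc a b) = μ.real (Ioi a) - μ.real (Ioi b) := by
  rw [← Ioi_sdiff_Ioi, measureReal_sdiff (Ioi_subset_Ioi hab) measurableSet_Ioi]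

theorem setIntegral_Ioi_eq_sum_add {a : ℕ → ℝ} (ha : Monotone a)
    (hg : IntegrableOn g (Ioi (a 0)) μ) (N : ℕ) :
    ∫ z in Ioi (a 0), g z ∂μ =
      ∑ k ∈ Finset.range N, (∫ z in Ioc (a k) (a (k + 1)), g z ∂μ) + ∫ z in Ioi (a N), g z ∂μ := by
  induction N with
  | zero => simp
  | succ N ih =>
    have hsub : Ioi (a N) ⊆ Ioi (a 0) := Ioi_subset_Ioi (ha N.zero_le)
    rw [ih, Finset.sum_range_succ, add_assoc, ← setIntegral_union (Ioc_disjoint_Ioi le_rfl)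
      measurableSet_Ioi (hg.mono_set (Ioc_subset_Ioi_self.trans hsub))
      (hg.mono_set ((Ioi_subset_Ioi (ha N.le_succ)).trans hsub)),
      Ioc_union_Ioi_eq_Ioi (ha N.le_succ)]

theorem Antitone.sum_mul_sub_le_setIntegral_Ioi [IsFiniteMeasure μ] (hg : Antitone g)
    (hg0 : 0 ≤ g) {a : ℕ → ℝ} (ha : Monotone a) (N : ℕ) :
    ∑ k ∈ Finset.range N, g (a (k + 1)) * (μ.real (Ioi (a k)) - μ.real (Ioi (a (k + 1))))
      ≤ ∫ z in Ioi (a 0), g z ∂μ := by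
  rw [setIntegral_Ioi_eq_sum_add ha (hg.integrableOn_Ioi hg0 _) N]
  refine le_add_of_le_of_nonneg (Finset.sum_le_sum fun k _ => ?_)
    (setIntegral_nonneg measurableSet_Ioi fun z _ => hg0 z)
  rw [← measureReal_Ioc_eq_sub (ha k.le_succ)]
  exact hg.mul_measureReal_le_setIntegral measurableSet_Ioc (fun _ hz => hz.2)
    ((hg.integrableOn_Ioi hg0 _).mono_set Ioc_subset_Ioi_self)

theorem Antitone.setIntegral_Ioi_le_sum_mul_sub [IsFiniteMeasure μ] (hg : Antitone g)
    (hg0 : 0 ≤ g) {a : ℕ → ℝ} (ha : Monotone a) (N : ℕ) :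
    ∫ z in Ioi (a 0), g z ∂μ ≤
      ∑ k ∈ Finset.range N, g (a k) * (μ.real (Ioi (a k)) - μ.real (Ioi (a (k + 1))))
        + g (a N) * μ.real (Ioi (a N)) := by
  rw [setIntegral_Ioi_eq_sum_add ha (hg.integrableOn_Ioi hg0 _) N]
  refine add_le_add (Finset.sum_le_sum fun k _ => ?_) <|
    hg.setIntegral_le_mul_measureReal measurableSet_Ioi Ioi_subset_Ici_self
      (hg.integrableOn_Ioi hg0 _)
  rw [← measureReal_Ioc_eq_sub (ha k.le_succ)]
  exact hg.setIntegral_le_mul_measureReal measurableSet_Ioc (fun _ hz => hz.1.le)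
    ((hg.integrableOn_Ioi hg0 _).mono_set Ioc_subset_Ioi_self)

-- Its limit is `σ / (ρ + σ)`, but the argument only needs that a positive limit exists.
noncomputable def tailRatio (μ : Measure ℝ) (g : ℝ → ℝ) (x : ℝ) : ℝ :=
  (∫ z in Ioi x, g z ∂μ) / (g x * μ.real (Ioi x))

theorem tailRatio_nonneg (hg0 : 0 ≤ g) (x : ℝ) : 0 ≤ tailRatio μ g x :=
  div_nonneg (setIntegral_nonneg measurableSet_Ioi fun z _ => hg0 z)
    (mul_nonneg (hg0 x) measureReal_nonneg)

theorem tailRatio_le_one [IsFiniteMeasure μ] (hg : Antitone g) (hg0 : 0 ≤ g) (x : ℝ) :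
    tailRatio μ g x ≤ 1 :=
  div_le_one_of_le₀ (hg.setIntegral_le_mul_measureReal measurableSet_Ioi Ioi_subset_Ici_self
    (hg.integrableOn_Ioi hg0 x)) (mul_nonneg (hg0 x) measureReal_nonneg)

theorem monotone_pow_mul {q x : ℝ} (hq : 1 ≤ q) (hx : 0 ≤ x) : Monotone fun k : ℕ => q ^ k * x :=
  fun _ _ hij => mul_le_mul_of_nonneg_right (pow_le_pow_right₀ hq hij) hx

theorem sum_le_tailRatio [IsFiniteMeasure μ] (hg : Antitone g) (hg0 : 0 ≤ g) {q x : ℝ}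
    (hq : 1 ≤ q) (hx : 0 ≤ x) (N : ℕ) :
    ∑ k ∈ Finset.range N, g (q ^ (k + 1) * x) / g x *
      ((μ.real (Ioi (q ^ k * x)) - μ.real (Ioi (q ^ (k + 1) * x))) / μ.real (Ioi x))
      ≤ tailRatio μ g x := by
  have h := hg.sum_mul_sub_le_setIntegral_Ioi (μ := μ) hg0 (monotone_pow_mul hq hx) N
  simp only [pow_zero, one_mul] at h
  simp_rw [div_mul_div_comm, ← Finset.sum_div]
  exact div_le_div_of_nonneg_right h (mul_nonneg (hg0 x) measureReal_nonneg)

theorem tailRatio_le_sum [IsFiniteMeasure μ] (hg : Antitone g) (hg0 : 0 ≤ g) {q x : ℝ}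
    (hq : 1 ≤ q) (hx : 0 ≤ x) (N : ℕ) :
    tailRatio μ g x ≤ ∑ k ∈ Finset.range N, g (q ^ k * x) / g x *
      ((μ.real (Ioi (q ^ k * x)) - μ.real (Ioi (q ^ (k + 1) * x))) / μ.real (Ioi x))
      + g (q ^ N * x) / g x * (μ.real (Ioi (q ^ N * x)) / μ.real (Ioi x)) := by
  have h := hg.setIntegral_Ioi_le_sum_mul_sub (μ := μ) hg0 (monotone_pow_mul hq hx) N
  simp only [pow_zero, one_mul] at h
  simp_rw [div_mul_div_comm, ← Finset.sum_div, ← add_div]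
  exact div_le_div_of_nonneg_right h (mul_nonneg (hg0 x) measureReal_nonneg)

variable {ρ σ : ℝ}

theorem le_liminf_tailRatio [IsFiniteMeasure μ] (hg_rv : RegularlyVaryingAtTop g ρ)
    (hT : RegularlyVaryingAtTop (fun x => μ.real (Ioi x)) σ) (hg : Antitone g) (hg0 : 0 ≤ g)
    {q : ℝ} (hq : 1 ≤ q) (N : ℕ) :
    ∑ k ∈ Finset.range N, (q ^ (k + 1)) ^ ρ * ((q ^ k) ^ σ - (q ^ (k + 1)) ^ σ)
      ≤ liminf (tailRatio μ g) atTop := by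
  have hq0 : 0 < q := by linarith
  have hlim := tendsto_finsetSum (Finset.range N) fun k _ =>
    hg_rv.tendsto_mul_sub hT (pow_pos hq0 k) (pow_pos hq0 (k + 1)) (pow_pos hq0 (k + 1))
  rw [← hlim.liminf_eq]
  exact liminf_le_liminf ((eventually_ge_atTop 0).mono fun x hx => sum_le_tailRatio hg hg0 hq hx N)
    hlim.isBoundedUnder_ge (isBoundedUnder_of ⟨1, tailRatio_le_one hg hg0⟩).isCoboundedUnder_ge

theorem limsup_tailRatio_le [IsFiniteMeasure μ] (hg_rv : RegularlyVaryingAtTop g ρ)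
    (hT : RegularlyVaryingAtTop (fun x => μ.real (Ioi x)) σ) (hg : Antitone g) (hg0 : 0 ≤ g)
    {q : ℝ} (hq : 1 ≤ q) (N : ℕ) :
    limsup (tailRatio μ g) atTop ≤
      ∑ k ∈ Finset.range N, (q ^ k) ^ ρ * ((q ^ k) ^ σ - (q ^ (k + 1)) ^ σ)
        + (q ^ N) ^ ρ * (q ^ N) ^ σ := by
  have hq0 : 0 < q := by linarith
  have hlim := (tendsto_finsetSum (Finset.range N) fun k _ =>
    hg_rv.tendsto_mul_sub hT (pow_pos hq0 k) (pow_pos hq0 (k + 1)) (pow_pos hq0 k)).add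
    ((hg_rv _ (pow_pos hq0 N)).mul (hT _ (pow_pos hq0 N)))
  rw [← hlim.limsup_eq]
  exact limsup_le_limsup ((eventually_ge_atTop 0).mono fun x hx => tailRatio_le_sum hg hg0 hq hx N)
    (isBoundedUnder_of ⟨0, tailRatio_nonneg hg0⟩).isCoboundedUnder_le hlim.isBoundedUnder_le

theorem limsup_tailRatio_le_rpow_mul_liminf [IsFiniteMeasure μ]
    (hg_rv : RegularlyVaryingAtTop g ρ) (hT : RegularlyVaryingAtTop (fun x => μ.real (Ioi x)) σ)
    (hρσ : ρ + σ < 0) (hg : Antitone g) (hg0 : 0 ≤ g) {q : ℝ} (hq : 1 < q) :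
    limsup (tailRatio μ g) atTop ≤ q ^ (-ρ) * liminf (tailRatio μ g) atTop := by
  have hq0 : 0 < q := by linarith
  have hshift (k : ℕ) : (q ^ k) ^ ρ = q ^ (-ρ) * (q ^ (k + 1)) ^ ρ := by
    rw [pow_succ, Real.mul_rpow (pow_pos hq0 k).le hq0.le, mul_left_comm, ← Real.rpow_add hq0,
      neg_add_cancel, Real.rpow_zero, mul_one]
  have hbound (N : ℕ) : limsup (tailRatio μ g) atTop ≤
      q ^ (-ρ) * liminf (tailRatio μ g) atTop + (q ^ N) ^ (ρ + σ) :=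
    calc limsup (tailRatio μ g) atTop
        ≤ ∑ k ∈ Finset.range N, (q ^ k) ^ ρ * ((q ^ k) ^ σ - (q ^ (k + 1)) ^ σ)
          + (q ^ N) ^ ρ * (q ^ N) ^ σ := limsup_tailRatio_le hg_rv hT hg hg0 hq.le N
      _ = q ^ (-ρ) * ∑ k ∈ Finset.range N, (q ^ (k + 1)) ^ ρ * ((q ^ k) ^ σ - (q ^ (k + 1)) ^ σ)
          + (q ^ N) ^ (ρ + σ) := by
        rw [Finset.mul_sum, Real.rpow_add (pow_pos hq0 N)]
        congr 1
        exact Finset.sum_congr rfl fun k _ => by rw [hshift k, mul_assoc]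
      _ ≤ q ^ (-ρ) * liminf (tailRatio μ g) atTop + (q ^ N) ^ (ρ + σ) := by
        gcongr
        exact le_liminf_tailRatio hg_rv hT hg hg0 hq.le N
  have htail : Tendsto (fun N : ℕ => (q ^ N) ^ (ρ + σ)) atTop (𝓝 0) := by
    simpa [Function.comp_def] using (tendsto_rpow_neg_atTop (neg_pos.2 hρσ)).comp
      (tendsto_pow_atTop_atTop_of_one_lt hq)
  simpa using ge_of_tendsto (tendsto_const_nhds.add htail) (Eventually.of_forall hbound)

theorem exists_pos_tendsto_tailRatio [IsFiniteMeasure μ] (hg_rv : RegularlyVaryingAtTop g ρ)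
    (hT : RegularlyVaryingAtTop (fun x => μ.real (Ioi x)) σ) (hσ : σ < 0)
    (hg : Antitone g) (hg0 : 0 ≤ g) :
    ∃ L, 0 < L ∧ Tendsto (tailRatio μ g) atTop (𝓝 L) := by
  have hρσ : ρ + σ < 0 := by linarith [hg_rv.nonpos_of_antitone hg hg0]
  refine ⟨_, ?_, tendsto_liminf_of_limsup_le_rpow_mul
    (isBoundedUnder_of ⟨1, tailRatio_le_one hg hg0⟩) (isBoundedUnder_of ⟨0, tailRatio_nonneg hg0⟩)
    fun q hq => limsup_tailRatio_le_rpow_mul_liminf hg_rv hT hρσ hg hg0 hq⟩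
  have h := le_liminf_tailRatio hg_rv hT hg hg0 one_le_two 1
  simp only [Finset.range_one, Finset.sum_singleton, zero_add, pow_one, pow_zero,
    Real.one_rpow] at h
  exact lt_of_lt_of_le (mul_pos (by positivity)
    (sub_pos.2 (Real.rpow_lt_one_of_one_lt_of_neg one_lt_two hσ))) h

theorem RegularlyVaryingAtTop.setIntegral_Ioi [IsFiniteMeasure μ]
    (hg_rv : RegularlyVaryingAtTop g ρ) (hT : RegularlyVaryingAtTop (fun x => μ.real (Ioi x)) σ)
    (hσ : σ < 0) (hg : Antitone g) (hg0 : 0 ≤ g) :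
    RegularlyVaryingAtTop (fun x => ∫ z in Ioi x, g z ∂μ) (ρ + σ) := by
  obtain ⟨L, hL, hlim⟩ := exists_pos_tendsto_tailRatio hg_rv hT hσ hg hg0
  have hT_anti : Antitone fun x => μ.real (Ioi x) :=
    fun _ _ hab => measureReal_mono (Ioi_subset_Ioi hab)
  have h := ((RegularlyVaryingAtTop.of_tendsto hlim hL.ne').mul hg_rv).mul hT
  rw [zero_add] at h
  refine h.congr (Eventually.of_forall fun x => ?_)
  have hne : g x * μ.real (Ioi x) ≠ 0 := mul_ne_zero (hg_rv.pos_of_antitone hg hg0 x).ne'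
    (hT.pos_of_antitone hT_anti (fun _ => measureReal_nonneg) x).ne'
  simp only [tailRatio, mul_assoc]
  exact div_mul_cancel₀ _ hne

end TailIntegral

theorem stmt_12_general (γ₁ γ₂ γ : ℝ) (hγ₁ : 0 < γ₁) (hγ₂ : 0 < γ₂)
    (hγ : γ = γ₁ * γ₂ / (γ₁ + γ₂))
    (F : StieltjesFunction ℝ)
    (hFbot : Tendsto F atBot (nhds 0)) (hFtop : Tendsto F atTop (nhds 1))
    (hFtail : ∀ s > (0 : ℝ),
      Tendsto (fun x : ℝ => (1 - F (s * x)) / (1 - F x)) atTop (nhds (s ^ (-1 / γ₁))))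
    (Gbar : ℝ → ℝ)
    (hGrange : ∀ x > (0 : ℝ), 0 < Gbar x ∧ Gbar x ≤ 1)
    (hGanti : AntitoneOn Gbar (Ioi 0))
    (hGtail : ∀ s > (0 : ℝ),
      Tendsto (fun y : ℝ => Gbar (s * y) / Gbar y) atTop (nhds (s ^ (-1 / γ₂))))
    (p : ℝ) (hp : 0 < p)
    (Fbar : ℝ → ℝ)
    (hFbar : ∀ x, Fbar x = p⁻¹ * ∫ z in Ioi x, Gbar z ∂F.measure) :
    ∀ s > (0 : ℝ),
      Tendsto (fun x : ℝ => Fbar (s * x) / Fbar x) atTop (nhds (s ^ (-1 / γ))) := by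
  have := F.isProbabilityMeasure hFbot hFtop
  -- `Gbar` only matters on `(1, ∞)`; freezing it below `1` makes it antitone on all of `ℝ`.
  set g : ℝ → ℝ := fun z => Gbar (max z 1)
  have hg_eq {z : ℝ} (hz : 1 ≤ z) : g z = Gbar z := by simp only [g, max_eq_left hz]
  have hmax_pos (z : ℝ) : 0 < max z 1 := one_pos.trans_le (le_max_right z 1)
  have hg : Antitone g := fun a b hab =>
    hGanti (hmax_pos a) (hmax_pos b) (max_le_max hab le_rfl)
  have hg0 : 0 ≤ g := fun z => (hGrange _ (hmax_pos z)).1.le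
  have hg_rv : RegularlyVaryingAtTop g (-1 / γ₂) :=
    RegularlyVaryingAtTop.congr hGtail ((eventually_ge_atTop 1).mono fun z hz => (hg_eq hz).symm)
  have hT : RegularlyVaryingAtTop (fun x => F.measure.real (Ioi x)) (-1 / γ₁) :=
    RegularlyVaryingAtTop.congr (f := fun x => 1 - F x) hFtail <| Eventually.of_forall fun x => by
      dsimp only
      rw [measureReal_def, F.measure_Ioi hFtop,
        ENNReal.toReal_ofReal (sub_nonneg.2 (F.mono.ge_of_tendsto hFtop x))]
  have hFbar_eq : (fun x => p⁻¹ * ∫ z in Ioi x, g z ∂F.measure) =ᶠ[atTop] Fbar :=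
    (eventually_ge_atTop 1).mono fun x hx => by
      dsimp only
      rw [hFbar x, setIntegral_congr_fun measurableSet_Ioi fun z hz => hg_eq (hx.trans hz.le)]
  have hexp : -1 / γ₂ + -1 / γ₁ = -1 / γ := by
    rw [hγ]
    field_simp
    ring
  rw [← hexp]
  exact ((hg_rv.setIntegral_Ioi hT (div_neg_of_neg_of_pos neg_one_lt_zero hγ₁) hg hg0).const_mul
    (inv_ne_zero hp.ne')).congr hFbar_eq

/-- Let `γ₁, γ₂ > 0`, `γ = γ₁γ₂/(γ₁+γ₂)`. Let `F` be the distribution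
function of a positive random variable (a Stieltjes function vanishing on the negatives
with limit `1` at `+∞`) whose tail `1 - F` is regularly varying at infinity with index
`-1/γ₁`. Let `Gbar : (0,∞) → (0,1]` be non-increasing and regularly varying at infinity
with index `-1/γ₂`, and `p > 0`. Then `Fbar x = p⁻¹ ∫_(x,∞) Gbar z dF(z)` is regularly
varying at infinity with index `-1/γ`. -/
theorem stmt_12 (γ₁ γ₂ γ : ℝ) (hγ₁ : 0 < γ₁) (hγ₂ : 0 < γ₂)
    (hγ : γ = γ₁ * γ₂ / (γ₁ + γ₂))
    (F : StieltjesFunction ℝ)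
    (hFneg : ∀ x < (0 : ℝ), F x = 0)
    (hFbot : Tendsto F atBot (nhds 0)) (hFtop : Tendsto F atTop (nhds 1))
    (hFtail : ∀ s > (0 : ℝ),
      Tendsto (fun x : ℝ => (1 - F (s * x)) / (1 - F x)) atTop (nhds (s ^ (-1 / γ₁))))
    (Gbar : ℝ → ℝ)
    (hGrange : ∀ x > (0 : ℝ), 0 < Gbar x ∧ Gbar x ≤ 1)
    (hGanti : AntitoneOn Gbar (Ioi 0))
    (hGtail : ∀ s > (0 : ℝ),
      Tendsto (fun y : ℝ => Gbar (s * y) / Gbar y) atTop (nhds (s ^ (-1 / γ₂))))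
    (p : ℝ) (hp : 0 < p)
    (Fbar : ℝ → ℝ)
    (hFbar : ∀ x, Fbar x = p⁻¹ * ∫ z in Ioi x, Gbar z ∂F.measure) :
    ∀ s > (0 : ℝ),
      Tendsto (fun x : ℝ => Fbar (s * x) / Fbar x) atTop (nhds (s ^ (-1 / γ))) :=
  stmt_12_general γ₁ γ₂ γ hγ₁ hγ₂ hγ F hFbot hFtop hFtail Gbar hGrange hGanti hGtail p hp Fbar hFbar
end

section
/- Let γ₂ > 0. Let 𝐆 be a distribution function of a positive random variable (non-decreasing, right-continuous, lim_{y→−∞} 𝐆(y) = 0, lim_{y→∞} 𝐆(y) = 1) with Lebesgue–Stieltjes measure μ_𝐆, such that 𝐆̄ := 1 − 𝐆 is regularly varying at infinity with index −1/γ₂. Let 𝐅 : ℝ → [0,1] be non-decreasing with lim_{z→∞} 𝐅(z) = 1 and 𝐅(z) > 0 for all large z, and let p > 0. Define Ḡ(y) := p^{−1} ∫_{(y,∞)} 𝐅(z) dμ_𝐆(z). Then Ḡ is regularly varying at infinity with index −1/γ₂, i.e. for every s > 0, lim_{y→∞} Ḡ(sy)/Ḡ(y) = s^{−1/γ₂}.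 -/
/-!
Since `F z → 1`, the integral of `F` over `(y, ∞)` against `dG` is asymptotically equivalent to
the tail `1 - G y = μ_G (y, ∞)`. Asymptotic equivalence passes to the ratios
`f (s y) / f y`, so `Ḡ = p⁻¹ ∫_(y,∞) F dG` inherits the regular variation of `1 - G`.
-/

open Filter Set MeasureTheory Asymptotics Topology

def IsRegularlyVarying (f : ℝ → ℝ) (ρ : ℝ) : Prop :=
  ∀ s > (0 : ℝ), Tendsto (fun y => f (s * y) / f y) atTop (𝓝 (s ^ ρ))

theorem IsRegularlyVarying.const_mul {f : ℝ → ℝ} {ρ : ℝ} (hf : IsRegularlyVarying f ρ)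
    {c : ℝ} (hc : c ≠ 0) : IsRegularlyVarying (fun y => c * f y) ρ := by
  intro s hs
  simpa only [mul_div_mul_left _ _ hc] using hf s hs

theorem Asymptotics.IsEquivalent.isRegularlyVarying {u v : ℝ → ℝ} (huv : u ~[atTop] v)
    {ρ : ℝ} (hv : IsRegularlyVarying v ρ) : IsRegularlyVarying u ρ := by
  intro s hs
  have hcomp : (fun y => u (s * y)) ~[atTop] fun y => v (s * y) :=
    huv.comp_tendsto (tendsto_id.const_mul_atTop hs)
  exact (hcomp.div huv).symm.tendsto_nhds (hv s hs)

theorem isEquivalent_setIntegral_Ioi_measureReal {μ : Measure ℝ} {F : ℝ → ℝ}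
    (hμ : ∀ y, μ (Ioi y) < ⊤) (hF : ∀ y, IntegrableOn F (Ioi y) μ)
    (hFlim : Tendsto F atTop (𝓝 1)) :
    (fun y => ∫ z in Ioi y, F z ∂μ) ~[atTop] fun y => μ.real (Ioi y) := by
  refine isLittleO_iff.2 fun ε hε => ?_
  obtain ⟨z₀, hz₀⟩ :=
    eventually_atTop.1 (hFlim.eventually (Metric.closedBall_mem_nhds 1 hε))
  filter_upwards [eventually_ge_atTop z₀] with y hy
  have hsub : ∫ z in Ioi y, F z ∂μ - μ.real (Ioi y) = ∫ z in Ioi y, (F z - 1) ∂μ := by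
    rw [integral_sub (hF y) (integrableOn_const (hμ y).ne), setIntegral_const, smul_eq_mul,
      mul_one]
  rw [Pi.sub_apply, hsub, Real.norm_of_nonneg measureReal_nonneg]
  exact norm_setIntegral_le_of_norm_le_const (hμ y) fun z hz => hz₀ z (hy.trans hz.le)

theorem StieltjesFunction.measureReal_Ioi (G : StieltjesFunction ℝ) {l : ℝ}
    (hG : Tendsto G atTop (𝓝 l)) (x : ℝ) : G.measure.real (Ioi x) = l - G x := by
  rw [measureReal_def, G.measure_Ioi hG, ENNReal.toReal_ofReal]
  exact sub_nonneg.2 (G.mono.ge_of_tendsto hG x)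

theorem stmt_13_general (γ₂ : ℝ)
    (G : StieltjesFunction ℝ)
    (hGtop : Tendsto G atTop (nhds 1))
    (hGtail : ∀ s > (0 : ℝ),
      Tendsto (fun y : ℝ => (1 - G (s * y)) / (1 - G y)) atTop (nhds (s ^ (-1 / γ₂))))
    (F : ℝ → ℝ)
    (hFrange : ∀ z, 0 ≤ F z ∧ F z ≤ 1)
    (hFmono : Monotone F)
    (hFlim : Tendsto F atTop (nhds 1))
    (p : ℝ) (hp : 0 < p)
    (Gbar : ℝ → ℝ)
    (hGbar : ∀ y, Gbar y = p⁻¹ * ∫ z in Ioi y, F z ∂G.measure) :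
    ∀ s > (0 : ℝ),
      Tendsto (fun y : ℝ => Gbar (s * y) / Gbar y) atTop (nhds (s ^ (-1 / γ₂))) := by
  have hμ (y : ℝ) : G.measure (Ioi y) < ⊤ := by simp [G.measure_Ioi hGtop]
  have hF (y : ℝ) : IntegrableOn F (Ioi y) G.measure :=
    Measure.integrableOn_of_bounded (M := 1) (hμ y).ne hFmono.measurable.aestronglyMeasurable
      (ae_of_all _ fun z => (Real.norm_of_nonneg (hFrange z).1).trans_le (hFrange z).2)
  have hequiv : (fun y => ∫ z in Ioi y, F z ∂G.measure) ~[atTop] fun y => 1 - G y := by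
    simpa only [G.measureReal_Ioi hGtop] using
      isEquivalent_setIntegral_Ioi_measureReal hμ hF hFlim
  rw [show Gbar = fun y => p⁻¹ * ∫ z in Ioi y, F z ∂G.measure from funext hGbar]
  exact (hequiv.isRegularlyVarying hGtail).const_mul (inv_ne_zero hp.ne')

/-- Let `γ₂ > 0` and let `G` be the distribution function of a positive
random variable (a Stieltjes function vanishing on the negatives with limit `1` at `+∞`)
whose tail `1 - G` is regularly varying at infinity with index `-1/γ₂`. Let
`F : ℝ → [0,1]` be non-decreasing with `F z → 1` and `F z > 0` for all large `z`, and
`p > 0`. Then `Gbar y = p⁻¹ ∫_(y,∞) F z dG(z)` is regularly varying at infinity with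
index `-1/γ₂`. -/
theorem stmt_13 (γ₂ : ℝ) (hγ₂ : 0 < γ₂)
    (G : StieltjesFunction ℝ)
    (hGneg : ∀ y < (0 : ℝ), G y = 0)
    (hGbot : Tendsto G atBot (nhds 0)) (hGtop : Tendsto G atTop (nhds 1))
    (hGtail : ∀ s > (0 : ℝ),
      Tendsto (fun y : ℝ => (1 - G (s * y)) / (1 - G y)) atTop (nhds (s ^ (-1 / γ₂))))
    (F : ℝ → ℝ)
    (hFrange : ∀ z, 0 ≤ F z ∧ F z ≤ 1)
    (hFmono : Monotone F)
    (hFlim : Tendsto F atTop (nhds 1))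
    (hFpos : ∃ z₀ : ℝ, ∀ z ≥ z₀, 0 < F z)
    (p : ℝ) (hp : 0 < p)
    (Gbar : ℝ → ℝ)
    (hGbar : ∀ y, Gbar y = p⁻¹ * ∫ z in Ioi y, F z ∂G.measure) :
    ∀ s > (0 : ℝ),
      Tendsto (fun y : ℝ => Gbar (s * y) / Gbar y) atTop (nhds (s ^ (-1 / γ₂))) :=
  stmt_13_general γ₂ G hGtop hGtail F hFrange hFmono hFlim p hp Gbar hGbar
end
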